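/- arXiv:2508.19174 — 9 statements merged into one kernel-verified Lean document; each statement's English description precedes it below -/
import Mathlib

section
/- Let A be a separable complete normed complex algebra with no nonzero compact elements, and let T : A → ℓ∞ be an algebra homomorphism that is an isometry. Then every element of the range of T that lies in c0 is zero; in particular the range of T is contained in (ℓ∞ \ c0) ∪ {0}. -/
open Filter Topology ENNReal

noncomputable section

/-- `ℓ∞`, the bounded complex sequences. -/
abbrev linf : Type := lp (fun _ : ℕ => ℂ) ∞

/-- `c₀`, the elements of `ℓ∞` tending to zero. -/
def c0 : Set linf := {f | Tendsto (fun n => (f : ∀ _ : ℕ, ℂ) n) atTop (𝓝 0)}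

/-- A "hull" determined by a null sequence of radii is compact in `ℓ∞`. -/
lemma isCompact_hull {c : ℕ → ℝ} (hc0 : ∀ n, 0 ≤ c n) (hc : Tendsto c atTop (𝓝 0)) :
    IsCompact {y : linf | ∀ n, ‖(y : ∀ _ : ℕ, ℂ) n‖ ≤ c n} := by
  set S : Set (∀ _ : ℕ, ℂ) := Set.univ.pi fun n => Metric.closedBall (0 : ℂ) (c n) with hS
  have hScpt : IsCompact S := isCompact_univ_pi fun n => isCompact_closedBall 0 (c n)
  have hmemS : ∀ v : S, ∀ n, ‖(v : ∀ _ : ℕ, ℂ) n‖ ≤ c n := by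
    intro v n
    have := v.2 n (Set.mem_univ n)
    simpa [dist_zero_right] using this
  obtain ⟨C, hC⟩ : ∃ C : ℝ, ∀ n, c n ≤ C := by
    obtain ⟨C, hCub⟩ := hc.bddAbove_range
    exact ⟨C, fun n => hCub ⟨n, rfl⟩⟩
  have hmem : ∀ v : S, Memℓp (v : ∀ _ : ℕ, ℂ) ∞ := by
    intro v
    apply memℓp_infty
    refine ⟨C, ?_⟩
    rintro r ⟨n, rfl⟩
    exact (hmemS v n).trans (hC n)
  set Ψ : S → linf := fun v => ⟨(v : ∀ _ : ℕ, ℂ), hmem v⟩ with hΨ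
  have hcoord : ∀ n : ℕ, Continuous fun v : S => (v : ∀ _ : ℕ, ℂ) n := fun n =>
    (continuous_apply n).comp continuous_subtype_val
  have hΨc : Continuous Ψ := by
    rw [continuous_iff_continuousAt]
    intro v₀
    rw [ContinuousAt, Metric.tendsto_nhds]
    intro ε hε
    obtain ⟨N, hN⟩ := (Metric.tendsto_atTop.mp hc (ε / 4) (by linarith)) 
    have hev : ∀ᶠ v : S in 𝓝 v₀, ∀ n ∈ Finset.range N,
        ‖(v : ∀ _ : ℕ, ℂ) n - (v₀ : ∀ _ : ℕ, ℂ) n‖ < ε / 2 := by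
      rw [eventually_all_finset]
      intro n _
      have : Tendsto (fun v : S => (v : ∀ _ : ℕ, ℂ) n) (𝓝 v₀) (𝓝 ((v₀ : ∀ _ : ℕ, ℂ) n)) :=
        (hcoord n).continuousAt
      have := this.sub_const ((v₀ : ∀ _ : ℕ, ℂ) n)
      rw [sub_self] at this
      have := this.norm
      rw [norm_zero] at this
      exact this.eventually_lt_const (by linarith)
    filter_upwards [hev] with v hv
    rw [dist_eq_norm]
    have hle : ‖Ψ v - Ψ v₀‖ ≤ ε / 2 := by
      apply lp.norm_le_of_forall_le (by linarith)
      intro n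
      have hcoe : ((Ψ v - Ψ v₀ : linf) : ∀ _ : ℕ, ℂ) n
          = (v : ∀ _ : ℕ, ℂ) n - (v₀ : ∀ _ : ℕ, ℂ) n := rfl
      rw [hcoe]
      by_cases hn : n < N
      · exact (hv n (Finset.mem_range.mpr hn)).le
      · have h1 := hmemS v n
        have h2 := hmemS v₀ n
        have h3 : c n < ε / 4 := by
          have := hN n (not_lt.mp hn)
          rwa [Real.dist_eq, sub_zero, abs_of_nonneg (hc0 n)] at this
        calc ‖(v : ∀ _ : ℕ, ℂ) n - (v₀ : ∀ _ : ℕ, ℂ) n‖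
            ≤ ‖(v : ∀ _ : ℕ, ℂ) n‖ + ‖(v₀ : ∀ _ : ℕ, ℂ) n‖ := norm_sub_le _ _
          _ ≤ c n + c n := add_le_add h1 h2
          _ ≤ ε / 2 := by linarith
    linarith
  have himg : {y : linf | ∀ n, ‖(y : ∀ _ : ℕ, ℂ) n‖ ≤ c n} = Set.range Ψ := by
    ext y
    constructor
    · intro hy
      refine ⟨⟨(y : ∀ _ : ℕ, ℂ), ?_⟩, ?_⟩
      · intro n _
        simpa [dist_zero_right] using hy n
      · exact lp.ext rfl
    · rintro ⟨v, rfl⟩ n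
      exact hmemS v n
  rw [himg]
  haveI : CompactSpace S := isCompact_iff_compactSpace.mp hScpt
  exact isCompact_range hΨc

/-- **Theorem 1.4 (general principle).** If `A` is a separable complete normed complex
algebra with no nonzero compact elements and `T : A → ℓ∞` is a multiplicative (algebra)
isometry, then every element of the range of `T` lying in `c₀` is zero; equivalently,
`T(A) ⊆ (ℓ∞ \ c₀) ∪ {0}`. -/
theorem range_inter_c0_eq_zero_of_no_compact_elements
    {A : Type*} [NormedRing A] [NormedAlgebra ℂ A] [CompleteSpace A]
    [TopologicalSpace.SeparableSpace A]
    (hK : ∀ a : A, IsCompactOperator (fun x : A => a * x * a) → a = 0)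
    (T : A →ₙₐ[ℂ] linf) (hT : Isometry T) :
    ∀ y ∈ Set.range T, y ∈ c0 → y = 0 := by
  rintro y ⟨a, rfl⟩ hy
  suffices ha : a = 0 by rw [ha, map_zero]
  apply hK
  set f : linf := T a with hf
  have hy' : Tendsto (fun n => (f : ∀ _ : ℕ, ℂ) n) atTop (𝓝 0) := hy
  set c : ℕ → ℝ := fun n => ‖(f : ∀ _ : ℕ, ℂ) n‖ * ‖(f : ∀ _ : ℕ, ℂ) n‖ with hcdef
  have hc0 : ∀ n, 0 ≤ c n := fun n => mul_nonneg (norm_nonneg _) (norm_nonneg _)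
  have hc : Tendsto c atTop (𝓝 0) := by
    have hn := hy'.norm
    rw [norm_zero] at hn
    simpa using hn.mul hn
  set K : Set linf := {y : linf | ∀ n, ‖(y : ∀ _ : ℕ, ℂ) n‖ ≤ c n} with hKdef
  have hKc : IsCompact K := isCompact_hull hc0 hc
  have hTemb : Topology.IsClosedEmbedding T := hT.isClosedEmbedding
  refine ⟨T ⁻¹' K, hTemb.isCompact_preimage hKc, ?_⟩
  refine mem_of_superset (Metric.closedBall_mem_nhds (0 : A) one_pos) ?_
  intro x hx
  have hxn : ‖x‖ ≤ 1 := by simpa [dist_zero_right] using hx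
  show T (a * x * a) ∈ K
  have hTx : T (a * x * a) = f * T x * f := by rw [map_mul, map_mul]
  rw [hTx]
  intro n
  have hcoe : ((f * T x * f : linf) : ∀ _ : ℕ, ℂ) n
      = (f : ∀ _ : ℕ, ℂ) n * (T x : ∀ _ : ℕ, ℂ) n * (f : ∀ _ : ℕ, ℂ) n := by
    rw [lp.infty_coeFn_mul, lp.infty_coeFn_mul]
    rfl
  rw [hcoe]
  have hTxn : ‖(T x : ∀ _ : ℕ, ℂ) n‖ ≤ 1 := by
    have h1 : ‖(T x : ∀ _ : ℕ, ℂ) n‖ ≤ ‖T x‖ := lp.norm_apply_le_norm ENNReal.top_ne_zero _ n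
    have h2 : ‖T x‖ = ‖x‖ := hT.norm_map_of_map_zero (map_zero T) x
    linarith
  calc ‖(f : ∀ _ : ℕ, ℂ) n * (T x : ∀ _ : ℕ, ℂ) n * (f : ∀ _ : ℕ, ℂ) n‖
      = ‖(f : ∀ _ : ℕ, ℂ) n‖ * ‖(T x : ∀ _ : ℕ, ℂ) n‖ * ‖(f : ∀ _ : ℕ, ℂ) n‖ := by
        rw [norm_mul, norm_mul]
    _ ≤ ‖(f : ∀ _ : ℕ, ℂ) n‖ * 1 * ‖(f : ∀ _ : ℕ, ℂ) n‖ := by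
        gcongr
    _ = c n := by ring
end
end

section
/- Let A be a commutative non-unital C*-algebra having no multiplicative unit (there is no e ∈ A with e * a = a for all a ∈ A), let H be a complex Hilbert space, and let B be a von Neumann algebra on H (VonNeumannAlgebra H) whose elements commute pairwise. Let φ : A → B be an injective non-unital star-algebra homomorphism. Then there exists an injective star-algebra homomorphism φ̃ : 𝓜(ℂ, A) → B whose composition with the canonical embedding of A into 𝓜(ℂ, A) equals φ, and such that for every two-sided ring ideal I of B satisfying I ∩ Set.range φ = {0} one has Set.range φ̃ ∩ I = {0}. -/
/-!
A multiplier `T` is extended to the operator sending `ψ(a)ξ` to `ψ(T a)ξ` on the essential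
subspace `[ψ(A)H]` and vanishing on its orthogonal complement. It is well defined and bounded by
`‖T‖` because `ψ(T e)` converges to it on `span ψ(A)H` along an approximate unit `e` of `A`.
Being determined by `ψ`, the extension commutes with everything commuting with `ψ(A)`, hence lies
in the von Neumann algebra `B = B''`. Finally `φ̃(T) φ(a) = φ(T a)`, so a multiplier whose image
lies in an ideal missing `range φ` kills every `a`, and is therefore zero.
-/

open MultiplierAlgebra

noncomputable section

open Set Filter Topology
open scoped CStarAlgebra

namespace DoubleCentralizer

variable {A : Type*} [NonUnitalNormedRing A] [NormedSpace ℂ A] [SMulCommClass ℂ A A]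
  [IsScalarTower ℂ A A] [StarRing A] [CStarRing A]

theorem fst_mul (T : 𝓜(ℂ, A)) (a b : A) : T.fst (a * b) = T.fst a * b := by
  set d := T.fst (a * b) - T.fst a * b
  have : star d * d = 0 := by
    rw [mul_sub, ← T.central, ← mul_assoc, T.central, mul_assoc, sub_self]
  exact sub_eq_zero.mp (CStarRing.star_mul_self_eq_zero_iff d |>.mp this)

theorem fst_eq_zero_iff {T : 𝓜(ℂ, A)} : T.fst = 0 ↔ T = 0 := by
  rw [← norm_eq_zero (a := T.fst), norm_fst, norm_eq_zero]

end DoubleCentralizer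

theorem ContinuousLinearMap.ext_of_eqOn_of_eqOn_orthogonal {𝕜 E F : Type*} [RCLike 𝕜]
    [NormedAddCommGroup E] [InnerProductSpace 𝕜 E] [NormedAddCommGroup F] [NormedSpace 𝕜 F]
    (K : Submodule 𝕜 E) [K.HasOrthogonalProjection] {x y : E →L[𝕜] F}
    (hK : ∀ k ∈ K, x k = y k) (hKperp : ∀ m ∈ Kᗮ, x m = y m) : x = y := by
  ext ξ
  obtain ⟨k, hk, m, hm, rfl⟩ := K.exists_add_mem_mem_orthogonal ξ
  rw [map_add, map_add, hK k hk, hKperp m hm]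

namespace NonUnitalStarAlgHom

section Geometry

variable {A : Type*} [NonUnitalRing A] [StarRing A] [Module ℂ A]
  {H : Type*} [NormedAddCommGroup H] [InnerProductSpace ℂ H] [CompleteSpace H]
  (ψ : A →⋆ₙₐ[ℂ] (H →L[ℂ] H))

def essSubspace : Submodule ℂ H :=
  (Submodule.span ℂ (range fun p : A × H => ψ p.1 p.2)).topologicalClosure

instance : CompleteSpace ψ.essSubspace :=
  Submodule.topologicalClosure.completeSpace _

theorem apply_mem_essSubspace (a : A) (ξ : H) : ψ a ξ ∈ ψ.essSubspace :=
  Submodule.le_topologicalClosure _ (Submodule.subset_span ⟨(a, ξ), rfl⟩)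

theorem inner_apply_left (a : A) (ξ η : H) :
    inner ℂ (ψ a ξ) η = inner ℂ ξ (ψ (star a) η) := by
  rw [map_star, ContinuousLinearMap.star_eq_adjoint, ContinuousLinearMap.adjoint_inner_right]

theorem mem_essSubspace_orthogonal_iff {m : H} :
    m ∈ ψ.essSubspaceᗮ ↔ ∀ a, ψ a m = 0 := by
  rw [essSubspace, Submodule.orthogonal_closure, ← Submodule.span_singleton_le_iff_mem,
    ← Submodule.isOrtho_iff_le, Submodule.isOrtho_span]
  simp only [mem_singleton_iff, forall_eq, forall_mem_range, Prod.forall,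
    inner_eq_zero_symm (x := m), inner_apply_left]
  rw [star_involutive.surjective.forall (p := fun a => ψ a m = 0)]
  exact forall_congr' fun a => ⟨fun h => ext_inner_left ℂ fun ξ => by rw [h, inner_zero_right],
    fun h ξ => by rw [h, inner_zero_right]⟩

theorem eqOn_essSubspace {x y : H →L[ℂ] H} (h : ∀ a, x * ψ a = y * ψ a) :
    ∀ k ∈ ψ.essSubspace, x k = y k := by
  suffices ψ.essSubspace ≤ LinearMap.ker ((x - y : H →L[ℂ] H) : H →ₗ[ℂ] H) from
    fun k hk => sub_eq_zero.mp (this hk)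
  refine Submodule.topologicalClosure_minimal _ ?_ (x - y).isClosed_ker
  rw [Submodule.span_le]
  rintro _ ⟨⟨a, ξ⟩, rfl⟩
  exact sub_eq_zero.mpr (congrArg (· ξ) (h a))

end Geometry

section Multiplier

variable {A : Type*} [NonUnitalCStarAlgebra A]
  {H : Type*} [NormedAddCommGroup H] [InnerProductSpace ℂ H] [CompleteSpace H]
  (ψ : A →⋆ₙₐ[ℂ] (H →L[ℂ] H))

def sumApply (f : A → A) : (A × H →₀ ℂ) →ₗ[ℂ] H :=
  Finsupp.linearCombination ℂ fun p => ψ (f p.1) p.2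

theorem sumApply_mem_essSubspace (f : A → A) (v : A × H →₀ ℂ) :
    ψ.sumApply f v ∈ ψ.essSubspace := by
  rw [sumApply, Finsupp.linearCombination_apply]
  exact Submodule.sum_smul_mem _ _ fun p _ => ψ.apply_mem_essSubspace _ _

theorem sumApply_single (f : A → A) (a : A) (ξ : H) :
    ψ.sumApply f (Finsupp.single (a, ξ) 1) = ψ (f a) ξ := by
  simp [sumApply]

theorem denseRange_sumApply_id :
    DenseRange ((ψ.sumApply id).codRestrict _ (ψ.sumApply_mem_essSubspace id)) := by
  refine Subtype.dense_iff.2 ?_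
  rw [← Set.range_comp]
  show closure _ ⊆ closure (range (ψ.sumApply id))
  rw [← LinearMap.coe_range, sumApply, Finsupp.range_linearCombination]
  rfl

theorem tendsto_apply_sumApply {l : Filter A} (hl : l.IsApproximateUnit) (T : 𝓜(ℂ, A))
    (v : A × H →₀ ℂ) :
    Tendsto (fun e => ψ (T.fst e) (ψ.sumApply id v)) l (𝓝 (ψ.sumApply T.fst v)) := by
  simp only [sumApply, Finsupp.linearCombination_apply, Finsupp.sum, map_sum, map_smul, id]
  refine tendsto_finsetSum _ fun p _ => ?_
  have hcont : Continuous fun a => v p • ψ (T.fst a) p.2 := by fun_prop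
  simpa only [Function.comp_def, DoubleCentralizer.fst_mul, map_mul, mul_apply_eq_comp] using
    (hcont.tendsto p.1).comp (hl.tendsto_mul_right p.1)

theorem norm_sumApply_le (T : 𝓜(ℂ, A)) (v : A × H →₀ ℂ) :
    ‖ψ.sumApply T.fst v‖ ≤ ‖T‖ * ‖ψ.sumApply id v‖ := by
  -- the spectral order only serves to produce Mathlib's increasing approximate unit of `A`
  let _ := CStarAlgebra.spectralOrder A
  have := CStarAlgebra.spectralOrderedRing A
  have hu := CStarAlgebra.increasingApproximateUnit A
  refine le_of_tendsto (ψ.tendsto_apply_sumApply hu.toIsApproximateUnit T v).norm ?_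
  filter_upwards [hu.eventually_norm] with e he
  calc ‖ψ (T.fst e) (ψ.sumApply id v)‖ ≤ ‖ψ (T.fst e)‖ * ‖ψ.sumApply id v‖ :=
        (ψ (T.fst e)).le_opNorm _
    _ ≤ ‖T.fst e‖ * ‖ψ.sumApply id v‖ := by gcongr; exact NonUnitalStarAlgHom.norm_apply_le ψ _
    _ ≤ ‖T‖ * ‖ψ.sumApply id v‖ := by gcongr; simpa using T.fst.le_opNorm_of_le he

def extendMultiplier (T : 𝓜(ℂ, A)) : H →L[ℂ] H :=
  ψ.essSubspace.subtypeL ∘L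
    ((ψ.sumApply T.fst).codRestrict _ (ψ.sumApply_mem_essSubspace _)).extendOfNorm
      ((ψ.sumApply id).codRestrict _ (ψ.sumApply_mem_essSubspace id)) ∘L
    ψ.essSubspace.orthogonalProjectionOnto

theorem extendMultiplier_apply_mem (T : 𝓜(ℂ, A)) (ξ : H) :
    ψ.extendMultiplier T ξ ∈ ψ.essSubspace :=
  Subtype.prop _

theorem extendMultiplier_mul (T : 𝓜(ℂ, A)) (a : A) :
    ψ.extendMultiplier T * ψ a = ψ (T.fst a) := by
  ext ξ
  have hproj : ψ.essSubspace.orthogonalProjectionOnto (ψ a ξ) =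
      (ψ.sumApply id).codRestrict _ (ψ.sumApply_mem_essSubspace id) (.single (a, ξ) 1) :=
    (ψ.essSubspace.orthogonalProjectionOnto_mem_subspace_eq_self
      ⟨_, ψ.apply_mem_essSubspace a ξ⟩).trans (Subtype.ext (ψ.sumApply_single id a ξ).symm)
  rw [mul_apply_eq_comp, extendMultiplier, ContinuousLinearMap.comp_apply,
    ContinuousLinearMap.comp_apply, hproj, LinearMap.extendOfNorm_eq
      (f := (ψ.sumApply T.fst).codRestrict _ (ψ.sumApply_mem_essSubspace _))
      ψ.denseRange_sumApply_id ⟨‖T‖, ψ.norm_sumApply_le T⟩]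
  exact ψ.sumApply_single _ a ξ

theorem extendMultiplier_apply_of_mem_orthogonal (T : 𝓜(ℂ, A)) {m : H}
    (hm : m ∈ ψ.essSubspaceᗮ) : ψ.extendMultiplier T m = 0 := by
  simp [extendMultiplier, Submodule.orthogonalProjectionOnto_apply_of_mem_orthogonal hm]

theorem eq_extendMultiplier {T : 𝓜(ℂ, A)} {x : H →L[ℂ] H} (hx : ∀ a, x * ψ a = ψ (T.fst a))
    (hx' : ∀ m ∈ ψ.essSubspaceᗮ, x m = 0) : x = ψ.extendMultiplier T :=
  ContinuousLinearMap.ext_of_eqOn_of_eqOn_orthogonal ψ.essSubspace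
    (ψ.eqOn_essSubspace fun a => by rw [hx, extendMultiplier_mul])
    fun m hm => by rw [hx' m hm, extendMultiplier_apply_of_mem_orthogonal ψ T hm]

theorem mul_extendMultiplier (T : 𝓜(ℂ, A)) (b : A) :
    ψ b * ψ.extendMultiplier T = ψ (T.snd b) := by
  refine ContinuousLinearMap.ext_of_eqOn_of_eqOn_orthogonal ψ.essSubspace
    (ψ.eqOn_essSubspace fun a => ?_) fun m hm => ?_
  · rw [mul_assoc, extendMultiplier_mul, ← map_mul, ← map_mul, T.central]
  · rw [mul_apply_eq_comp, extendMultiplier_apply_of_mem_orthogonal ψ T hm, map_zero,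
      ψ.mem_essSubspace_orthogonal_iff.mp hm]

theorem extendMultiplier_star (T : 𝓜(ℂ, A)) :
    ψ.extendMultiplier (star T) = star (ψ.extendMultiplier T) := by
  refine (ψ.eq_extendMultiplier (fun a => ?_) fun m hm => ?_).symm
  · rw [← star_star (ψ a), ← star_mul, ← map_star, mul_extendMultiplier, ← map_star,
      DoubleCentralizer.star_fst]
  · refine ext_inner_left ℂ fun ξ => ?_
    rw [ContinuousLinearMap.star_eq_adjoint, ContinuousLinearMap.adjoint_inner_right,
      Submodule.inner_right_of_mem_orthogonal (ψ.extendMultiplier_apply_mem T ξ) hm,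
      inner_zero_right]

def extendMultiplierHom : 𝓜(ℂ, A) →⋆ₙₐ[ℂ] (H →L[ℂ] H) where
  toFun := ψ.extendMultiplier
  map_smul' c T := (ψ.eq_extendMultiplier (x := c • ψ.extendMultiplier T)
    (fun a => by rw [smul_mul_assoc, extendMultiplier_mul, DoubleCentralizer.smul_fst,
      smul_apply, map_smul])
    fun m hm => by
      rw [smul_apply, extendMultiplier_apply_of_mem_orthogonal ψ T hm, smul_zero]).symm
  map_zero' := (ψ.eq_extendMultiplier (x := 0) (fun a => by simp) fun m _ => rfl).symm
  map_add' T T' := (ψ.eq_extendMultiplier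
    (fun a => by rw [add_mul, extendMultiplier_mul, extendMultiplier_mul,
      DoubleCentralizer.add_fst, add_apply, map_add])
    fun m hm => by
      rw [add_apply, extendMultiplier_apply_of_mem_orthogonal ψ T hm,
        extendMultiplier_apply_of_mem_orthogonal ψ T' hm, add_zero]).symm
  map_mul' T T' := (ψ.eq_extendMultiplier
    (fun a => by rw [mul_assoc, extendMultiplier_mul, extendMultiplier_mul,
      DoubleCentralizer.mul_fst, mul_apply_eq_comp])
    fun m hm => by
      rw [mul_apply_eq_comp, extendMultiplier_apply_of_mem_orthogonal ψ T' hm, map_zero]).symm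
  map_star' := ψ.extendMultiplier_star

@[simp]
theorem coe_extendMultiplierHom : ⇑ψ.extendMultiplierHom = ψ.extendMultiplier :=
  rfl

theorem extendMultiplierHom_coe (a : A) :
    ψ.extendMultiplierHom (DoubleCentralizer.coeHom (𝕜 := ℂ) a) = ψ a :=
  (ψ.eq_extendMultiplier (fun b => by simp [← map_mul])
    fun m hm => ψ.mem_essSubspace_orthogonal_iff.mp hm a).symm

theorem eq_zero_of_extendMultiplier_mul_eq_zero (hψ : Function.Injective ψ) {T : 𝓜(ℂ, A)}
    (hT : ∀ a, ψ.extendMultiplier T * ψ a = 0) : T = 0 :=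
  DoubleCentralizer.fst_eq_zero_iff.mp <| ContinuousLinearMap.ext fun a =>
    hψ <| by rw [← extendMultiplier_mul, hT]; exact (map_zero ψ).symm

theorem extendMultiplierHom_injective (hψ : Function.Injective ψ) :
    Function.Injective ψ.extendMultiplierHom :=
  (injective_iff_map_eq_zero _).mpr fun T hT =>
    ψ.eq_zero_of_extendMultiplier_mul_eq_zero hψ fun a => by
      rw [← coe_extendMultiplierHom, hT, zero_mul]

theorem extendMultiplier_mem_centralizer_centralizer {s : Set (H →L[ℂ] H)}
    (hs : ∀ a, ψ a ∈ s) (T : 𝓜(ℂ, A)) :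
    ψ.extendMultiplier T ∈ centralizer (centralizer s) := by
  intro y hy
  have hψy : ∀ a, ψ a * y = y * ψ a := fun a => hy (ψ a) (hs a)
  refine ContinuousLinearMap.ext_of_eqOn_of_eqOn_orthogonal ψ.essSubspace
    (ψ.eqOn_essSubspace fun a => ?_) fun m hm => ?_
  · calc y * ψ.extendMultiplier T * ψ a = ψ (T.fst a) * y := by
          rw [mul_assoc, extendMultiplier_mul, hψy]
      _ = ψ.extendMultiplier T * y * ψ a := by
          rw [mul_assoc, ← hψy, ← mul_assoc, extendMultiplier_mul]
  · have hym : y m ∈ ψ.essSubspaceᗮ := ψ.mem_essSubspace_orthogonal_iff.mpr fun a => by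
      rw [← mul_apply_eq_comp, hψy, mul_apply_eq_comp, ψ.mem_essSubspace_orthogonal_iff.mp hm,
        map_zero]
    rw [mul_apply_eq_comp, mul_apply_eq_comp, extendMultiplier_apply_of_mem_orthogonal ψ T hm,
      extendMultiplier_apply_of_mem_orthogonal ψ T hym, map_zero]

end Multiplier

end NonUnitalStarAlgHom

theorem exists_injective_extension_to_multiplier_algebra_general
    {A : Type*} [NonUnitalCommCStarAlgebra A]
    {H : Type*} [NormedAddCommGroup H] [InnerProductSpace ℂ H] [CompleteSpace H]
    (B : VonNeumannAlgebra H)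
    (φ : A →⋆ₙₐ[ℂ] B.toStarSubalgebra) (hφ : Function.Injective φ) :
    ∃ φt : 𝓜(ℂ, A) →⋆ₙₐ[ℂ] B.toStarSubalgebra,
      Function.Injective φt ∧
      (∀ a : A, φt (DoubleCentralizer.coeHom (𝕜 := ℂ) a) = φ a) ∧
      ∀ I : TwoSidedIdeal B.toStarSubalgebra,
        (I : Set B.toStarSubalgebra) ∩ Set.range φ = {0} →
          Set.range φt ∩ (I : Set B.toStarSubalgebra) = {0} := by
  set ψ : A →⋆ₙₐ[ℂ] (H →L[ℂ] H) := (B.toStarSubalgebra.subtype : _ →⋆ₙₐ[ℂ] _).comp φ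
  have hψ : Function.Injective ψ := Subtype.val_injective.comp hφ
  have hmem (T : 𝓜(ℂ, A)) : ψ.extendMultiplierHom T ∈ B := by
    rw [← SetLike.mem_coe, ← B.centralizer_centralizer]
    exact ψ.extendMultiplier_mem_centralizer_centralizer (fun a => (φ a).2) T
  let φt : 𝓜(ℂ, A) →⋆ₙₐ[ℂ] B.toStarSubalgebra :=
    NonUnitalStarAlgHom.codRestrict ψ.extendMultiplierHom
      B.toStarSubalgebra.toNonUnitalStarSubalgebra hmem
  have hφt (T : 𝓜(ℂ, A)) (a : A) : φt T * φ a = φ (T.fst a) :=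
    Subtype.ext (ψ.extendMultiplier_mul T a)
  refine ⟨φt, fun T T' h => ψ.extendMultiplierHom_injective hψ (congrArg Subtype.val h),
    fun a => Subtype.ext (ψ.extendMultiplierHom_coe a), fun I hI => ?_⟩
  refine Set.eq_singleton_iff_unique_mem.mpr ⟨⟨⟨0, map_zero φt⟩, I.zero_mem⟩, ?_⟩
  rintro _ ⟨⟨T, rfl⟩, hT⟩
  suffices T = 0 by rw [this, map_zero]
  refine ψ.eq_zero_of_extendMultiplier_mul_eq_zero hψ fun a =>
    congrArg Subtype.val (?_ : φt T * φ a = 0)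
  have : φt T * φ a ∈ (I : Set B.toStarSubalgebra) ∩ Set.range φ :=
    ⟨I.mul_mem_right _ _ hT, T.fst a, (hφt T a).symm⟩
  rwa [hI] at this

/-- **Lemmas 2.8 and 2.9.** An injective star-homomorphism `φ` from a commutative non-unital
C*-algebra `A` (with no unit) into an abelian von Neumann algebra `B` extends to an injective
star-homomorphism `φ̃` on the multiplier algebra `𝓜(ℂ, A)`; moreover the range of `φ̃` meets
every two-sided ideal of `B` intersecting `range φ` trivially only at `0`. -/
theorem exists_injective_extension_to_multiplier_algebra
    {A : Type*} [NonUnitalCommCStarAlgebra A]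
    (hA : ¬ ∃ e : A, ∀ a : A, e * a = a)
    {H : Type*} [NormedAddCommGroup H] [InnerProductSpace ℂ H] [CompleteSpace H]
    (B : VonNeumannAlgebra H)
    (hcomm : ∀ x ∈ B, ∀ y ∈ B, x * y = y * x)
    (φ : A →⋆ₙₐ[ℂ] B.toStarSubalgebra) (hφ : Function.Injective φ) :
    ∃ φt : 𝓜(ℂ, A) →⋆ₙₐ[ℂ] B.toStarSubalgebra,
      Function.Injective φt ∧
      (∀ a : A, φt (DoubleCentralizer.coeHom (𝕜 := ℂ) a) = φ a) ∧
      ∀ I : TwoSidedIdeal B.toStarSubalgebra,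
        (I : Set B.toStarSubalgebra) ∩ Set.range φ = {0} →
          Set.range φt ∩ (I : Set B.toStarSubalgebra) = {0} :=
  exists_injective_extension_to_multiplier_algebra_general B φ hφ
end
end

section
/- Let A be a separable commutative non-unital C*-algebra having no multiplicative unit (there is no e ∈ A with e * a = a for all a ∈ A) and no nonzero compact elements. Then there exists an isometric injective star-algebra homomorphism Φ : 𝓜(ℂ, A) → ℓ∞ such that the only element of the range of Φ lying in c0 is 0. -/
open Filter Topology MultiplierAlgebra ENNReal

noncomputable section

section MyAuxPre

open WeakDual

variable {A : Type*} [NonUnitalCommCStarAlgebra A]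

lemma myExistsChar (a : A) {r : ℝ} (h0 : 0 ≤ r) (h : r < ‖a‖) :
    ∃ χ : characterSpace ℂ (Unitization ℂ A), r < ‖χ (a : Unitization ℂ A)‖ := by
  by_contra hc
  push_neg at hc
  have h1 : ‖gelfandTransform ℂ (Unitization ℂ A) (a : Unitization ℂ A)‖ ≤ r :=
    (ContinuousMap.norm_le _ h0).mpr fun χ => hc χ
  have h2 : ‖gelfandTransform ℂ (Unitization ℂ A) (a : Unitization ℂ A)‖
      = ‖(a : Unitization ℂ A)‖ :=
    (gelfandTransform_isometry (Unitization ℂ A)).norm_map_of_map_zero (map_zero _) _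
  rw [h2, Unitization.norm_inr] at h1
  linarith

end MyAuxPre

section MyAux

open WeakDual

variable {A : Type*} [NonUnitalCommCStarAlgebra A]

lemma myCharBound (χ : characterSpace ℂ (Unitization ℂ A)) (x : Unitization ℂ A) :
    ‖χ x‖ ≤ ‖x‖ :=
  AlgHom.norm_apply_le_self χ x


lemma myPowLe {r s C : ℝ} (hr : 0 ≤ r) (hs : 0 ≤ s) (hC : 0 < C)
    (h : ∀ n : ℕ, r ^ n ≤ C * s ^ n) : r ≤ s := by
  by_contra hrs
  push_neg at hrs
  have hr0 : 0 < r := lt_of_le_of_lt hs hrs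
  have hlt : s / r < 1 := (div_lt_one hr0).mpr hrs
  have h0 : (0:ℝ) ≤ s / r := by positivity
  have htend : Filter.Tendsto (fun n : ℕ => (s / r) ^ n) Filter.atTop (nhds 0) :=
    tendsto_pow_atTop_nhds_zero_of_lt_one h0 hlt
  obtain ⟨n, hn⟩ := (htend.eventually (gt_mem_nhds (show (0:ℝ) < 1 / C by positivity))).exists
  have hrn : 0 < r ^ n := pow_pos hr0 n
  have : C * s ^ n < r ^ n := by
    have hdp : (s / r) ^ n = s ^ n / r ^ n := div_pow s r n
    rw [hdp] at hn
    rw [div_lt_div_iff₀ hrn (by positivity : (0:ℝ) < C)] at hn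
    linarith [hn]
  linarith [h n, this]

lemma myExtension (χ : characterSpace ℂ (Unitization ℂ A)) (b : A)
    (hb : χ (b : Unitization ℂ A) ≠ 0) :
    ∃ e : 𝓜(ℂ, A) → ℂ,
      (∀ (T : 𝓜(ℂ, A)) (a : A),
        χ ((T.fst a : A) : Unitization ℂ A) = e T * χ (a : Unitization ℂ A)) ∧
      (∀ T S : 𝓜(ℂ, A), e (T + S) = e T + e S) ∧
      (∀ (c : ℂ) (T : 𝓜(ℂ, A)), e (c • T) = c * e T) ∧
      (∀ T S : 𝓜(ℂ, A), e (T * S) = e T * e S) ∧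
      (∀ T : 𝓜(ℂ, A), e (star T) = star (e T)) ∧
      (∀ T : 𝓜(ℂ, A), ‖e T‖ ≤ ‖T‖) := by
  classical
  set a₀ : A := star b * b with ha₀
  have hs : star a₀ = a₀ := by simp [ha₀, mul_comm]
  have hu : χ ((a₀ : A) : Unitization ℂ A) = star (χ (b : Unitization ℂ A)) * χ (b : Unitization ℂ A) := by
    rw [ha₀, Unitization.inr_mul, map_mul, Unitization.inr_star, map_star]
  have hu0 : χ ((a₀ : A) : Unitization ℂ A) ≠ 0 := by
    rw [hu]; exact mul_ne_zero (star_ne_zero.mpr hb) hb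
  have hustar : star (χ ((a₀ : A) : Unitization ℂ A)) = χ ((a₀ : A) : Unitization ℂ A) := by
    rw [hu]; simp [mul_comm]
  set u : ℂ := χ ((a₀ : A) : Unitization ℂ A) with hudef
  set e : 𝓜(ℂ, A) → ℂ := fun T => χ ((T.fst a₀ : A) : Unitization ℂ A) / u with he
  -- snd = fst under χ
  have hsndfst : ∀ T : 𝓜(ℂ, A),
      χ ((T.snd a₀ : A) : Unitization ℂ A) = χ ((T.fst a₀ : A) : Unitization ℂ A) := by
    intro T
    have hc := T.central a₀ a₀
    have := congrArg (fun x : A => χ (x : Unitization ℂ A)) hc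
    simp only [Unitization.inr_mul, map_mul] at this
    exact mul_right_cancel₀ hu0 (by rw [this]; ring)
  -- key identity
  have hkey : ∀ (T : 𝓜(ℂ, A)) (a : A),
      χ ((T.fst a : A) : Unitization ℂ A) = e T * χ (a : Unitization ℂ A) := by
    intro T a
    have hc := T.central a₀ a
    have h1 := congrArg (fun x : A => χ (x : Unitization ℂ A)) hc
    simp only [Unitization.inr_mul, map_mul] at h1
    -- h1 : χ (T.snd a₀) * χ a = χ a₀ * χ (T.fst a)
    rw [hsndfst] at h1
    rw [he]
    field_simp
    rw [h1, hudef]; ring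
  have hkey' : ∀ (T : 𝓜(ℂ, A)) (a : A),
      χ ((T.snd a : A) : Unitization ℂ A) = e T * χ (a : Unitization ℂ A) := by
    intro T a
    have hc := T.central a a₀
    have h1 := congrArg (fun x : A => χ (x : Unitization ℂ A)) hc
    simp only [Unitization.inr_mul, map_mul] at h1
    -- h1 : χ (T.snd a) * χ a₀ = χ a * χ (T.fst a₀)
    have h2 : χ ((T.fst a₀ : A) : Unitization ℂ A) = e T * u := by
      rw [hkey T a₀]
    rw [h2] at h1
    exact mul_right_cancel₀ hu0 (by rw [h1]; ring)
  have hadd : ∀ T S : 𝓜(ℂ, A), e (T + S) = e T + e S := by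
    intro T S
    have := hkey (T + S) a₀
    rw [DoubleCentralizer.add_fst, ContinuousLinearMap.add_apply, Unitization.inr_add, map_add,
      hkey T a₀, hkey S a₀] at this
    exact mul_right_cancel₀ hu0 (by rw [← this]; ring)
  have hsmul : ∀ (c : ℂ) (T : 𝓜(ℂ, A)), e (c • T) = c * e T := by
    intro c T
    have := hkey (c • T) a₀
    rw [DoubleCentralizer.smul_fst, ContinuousLinearMap.smul_apply, Unitization.inr_smul,
      map_smul, hkey T a₀, smul_eq_mul] at this
    exact mul_right_cancel₀ hu0 (by rw [← this]; ring)
  have hmul : ∀ T S : 𝓜(ℂ, A), e (T * S) = e T * e S := by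
    intro T S
    have := hkey (T * S) a₀
    rw [DoubleCentralizer.mul_fst, ContinuousLinearMap.mul_apply, hkey T (S.fst a₀),
      hkey S a₀] at this
    exact mul_right_cancel₀ hu0 (by rw [← this]; ring)
  have hstar : ∀ T : 𝓜(ℂ, A), e (star T) = star (e T) := by
    intro T
    have h1 := hkey (star T) a₀
    rw [DoubleCentralizer.star_fst, hs, Unitization.inr_star, map_star, hkey' T a₀] at h1
    have h2 : star (e T) * u = e (star T) * u := by
      rw [← h1, star_mul', hustar]
    exact (mul_right_cancel₀ hu0 h2).symm
  have hone : e 1 = 1 := by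
    have h1 := hkey 1 a₀
    rw [DoubleCentralizer.one_fst, ContinuousLinearMap.one_apply] at h1
    exact (mul_right_cancel₀ hu0 (by rw [← h1]; exact (one_mul u).symm ▸ rfl)).symm
  have hpow : ∀ (n : ℕ) (T : 𝓜(ℂ, A)), e (T ^ n) = (e T) ^ n := by
    intro n T
    induction n with
    | zero => simpa using hone
    | succ k ih => rw [pow_succ, hmul, ih, pow_succ]
  have hbdd : ∀ T : 𝓜(ℂ, A), ‖e T‖ ≤ ‖T‖ := by
    intro T
    have hu0' : (0:ℝ) < ‖u‖ := norm_pos_iff.mpr hu0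
    have hEbd : ∀ S : 𝓜(ℂ, A), ‖e S‖ ≤ ‖S‖ * (‖a₀‖ / ‖u‖) := by
      intro S
      have h1 : ‖χ ((S.fst a₀ : A) : Unitization ℂ A)‖ ≤ ‖S‖ * ‖a₀‖ := by
        calc ‖χ ((S.fst a₀ : A) : Unitization ℂ A)‖ ≤ ‖((S.fst a₀ : A) : Unitization ℂ A)‖ :=
              myCharBound χ _
          _ = ‖S.fst a₀‖ := Unitization.norm_inr _
          _ ≤ ‖S.fst‖ * ‖a₀‖ := S.fst.le_opNorm a₀
          _ = ‖S‖ * ‖a₀‖ := by rw [DoubleCentralizer.norm_fst]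
      rw [he]
      simp only [norm_div]
      rw [div_le_iff₀ hu0']
      calc ‖χ ((S.fst a₀ : A) : Unitization ℂ A)‖ ≤ ‖S‖ * ‖a₀‖ := h1
        _ = ‖S‖ * (‖a₀‖ / ‖u‖) * ‖u‖ := by
              rw [mul_assoc, div_mul_cancel₀ _ (ne_of_gt hu0')]
    set C : ℝ := max (‖a₀‖ / ‖u‖) 1 with hCdef
    have hC : (0:ℝ) < C := lt_of_lt_of_le one_pos (le_max_right _ _)
    refine myPowLe (norm_nonneg _) (norm_nonneg _) hC ?_
    intro n
    cases n with
    | zero => simp only [pow_zero, mul_one]; exact le_max_right _ _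
    | succ k =>
      calc ‖e T‖ ^ (k+1) = ‖(e T) ^ (k+1)‖ := (norm_pow _ _).symm
        _ = ‖e (T ^ (k+1))‖ := by rw [hpow]
        _ ≤ ‖T ^ (k+1)‖ * (‖a₀‖ / ‖u‖) := hEbd _
        _ ≤ ‖T‖ ^ (k+1) * (‖a₀‖ / ‖u‖) := by
            refine mul_le_mul_of_nonneg_right (norm_pow_le' T k.succ_pos) ?_
            positivity
        _ ≤ C * ‖T‖ ^ (k+1) := by
            rw [mul_comm]
            exact mul_le_mul_of_nonneg_right (le_max_left _ _) (by positivity)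
  exact ⟨e, hkey, hadd, hsmul, hmul, hstar, hbdd⟩

end MyAux

open WeakDual in
set_option maxHeartbeats 1000000 in
/-- **Theorem 2.11 (C*-algebra case).** If `A` is a separable commutative non-unital
C*-algebra without unit and with no nonzero compact elements, then the multiplier algebra
`𝓜(ℂ, A)` admits an isometric injective star-algebra embedding into `ℓ∞` whose range meets
`c₀` only at `0`. -/
theorem exists_isometric_embedding_of_multiplier_algebra_into_linf
    {A : Type*} [NonUnitalCommCStarAlgebra A] [TopologicalSpace.SeparableSpace A]
    (hA : ¬ ∃ e : A, ∀ a : A, e * a = a)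
    (hK : ∀ a : A, IsCompactOperator (fun x : A => a * x * a) → a = 0) :
    ∃ Φ : 𝓜(ℂ, A) →⋆ₙₐ[ℂ] linf,
      Isometry Φ ∧ Function.Injective Φ ∧ ∀ y ∈ Set.range Φ, y ∈ c0 → y = 0 := by
  classical
  obtain ⟨a₁, ha₁⟩ : ∃ a : A, a ≠ 0 := by
    by_contra h
    push_neg at h
    exact hA ⟨0, fun a => by rw [h a, mul_zero]⟩
  have : Nonempty A := ⟨a₁⟩
  have ha₁n : (0:ℝ) < ‖a₁‖ := norm_pos_iff.mpr ha₁
  obtain ⟨χ₁, hχ₁⟩ := myExistsChar a₁ (r := ‖a₁‖/2) (by positivity) (by linarith)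
  have hχ₁0 : χ₁ ((a₁ : A) : Unitization ℂ A) ≠ 0 := by
    intro h; rw [h, norm_zero] at hχ₁; linarith
  set d : ℕ → A := TopologicalSpace.denseSeq A with hd
  have hdr : DenseRange d := TopologicalSpace.denseRange_denseSeq A
  have hchoice : ∀ j : ℕ, ∃ (χ : characterSpace ℂ (Unitization ℂ A)) (b : A),
      χ ((b : A) : Unitization ℂ A) ≠ 0 ∧
      ((1 / ((Nat.unpair j).2 + 1) : ℝ) < ‖d (Nat.unpair j).1‖ →
        b = d (Nat.unpair j).1 ∧
        ‖d (Nat.unpair j).1‖ - 1 / ((Nat.unpair j).2 + 1) < ‖χ ((b : A) : Unitization ℂ A)‖) := by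
    intro j
    by_cases hj : (1 / ((Nat.unpair j).2 + 1) : ℝ) < ‖d (Nat.unpair j).1‖
    · have hk0 : (0:ℝ) < 1 / ((Nat.unpair j).2 + 1) := by positivity
      obtain ⟨χ, hχ⟩ := myExistsChar (d (Nat.unpair j).1)
        (r := ‖d (Nat.unpair j).1‖ - 1 / ((Nat.unpair j).2 + 1)) (by linarith) (by linarith)
      refine ⟨χ, d (Nat.unpair j).1, ?_, fun _ => ⟨rfl, hχ⟩⟩
      intro h; rw [h, norm_zero] at hχ; linarith
    · exact ⟨χ₁, a₁, hχ₁0, fun h => absurd h hj⟩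
  choose χs bs hbs hcond using hchoice
  choose es hkey hadd hsmul hmul hstar hbdd using fun j => myExtension (χs j) (bs j) (hbs j)
  have hmem : ∀ T : 𝓜(ℂ, A), Memℓp (fun n : ℕ => es (Nat.unpair n).1 T) ∞ := by
    intro T
    apply memℓp_infty
    refine ⟨‖T‖, ?_⟩
    rintro x ⟨n, rfl⟩
    exact hbdd _ T
  set Φ0 : 𝓜(ℂ, A) → linf := fun T => ⟨fun n => es (Nat.unpair n).1 T, hmem T⟩ with hΦ0
  have happ : ∀ (T : 𝓜(ℂ, A)) (n : ℕ), (Φ0 T : ∀ _ : ℕ, ℂ) n = es (Nat.unpair n).1 T :=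
    fun T n => rfl
  have hle : ∀ T : 𝓜(ℂ, A), ‖Φ0 T‖ ≤ ‖T‖ := fun T =>
    lp.norm_le_of_forall_le (norm_nonneg T) fun n => hbdd _ T
  have hge : ∀ T : 𝓜(ℂ, A), ‖T‖ ≤ ‖Φ0 T‖ := by
    intro T
    have hr0 : (0:ℝ) ≤ ‖Φ0 T‖ := norm_nonneg _
    have hrj : ∀ j, ‖es j T‖ ≤ ‖Φ0 T‖ := by
      intro j
      have h := lp.norm_apply_le_norm ENNReal.top_ne_zero (Φ0 T) (Nat.pair j 0)
      rwa [happ, Nat.unpair_pair] at h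
    rw [← DoubleCentralizer.norm_fst]
    refine ContinuousLinearMap.opNorm_le_bound _ hr0 ?_
    intro a
    refine le_of_forall_pos_le_add ?_
    intro ε hε
    obtain ⟨k, hk⟩ := exists_nat_one_div_lt (show (0:ℝ) < ε/2 by linarith)
    obtain ⟨m, hm⟩ : ∃ m, ‖d m - T.fst a‖ < ε/4 := by
      obtain ⟨m, hm⟩ := Metric.denseRange_iff.mp hdr (T.fst a) (ε/4) (by linarith)
      refine ⟨m, ?_⟩
      rw [dist_eq_norm] at hm
      rwa [norm_sub_rev]
    set j := Nat.pair m k with hj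
    have hjm : (Nat.unpair j).1 = m := by rw [hj, Nat.unpair_pair]
    have hjk : (Nat.unpair j).2 = k := by rw [hj, Nat.unpair_pair]
    have hchi : ∀ x : A, ‖χs j (x : Unitization ℂ A)‖ ≤ ‖x‖ := fun x => by
      calc ‖χs j (x : Unitization ℂ A)‖ ≤ ‖(x : Unitization ℂ A)‖ := myCharBound (χs j) _
        _ = ‖x‖ := Unitization.norm_inr x
    have hTfa : ‖χs j ((T.fst a : A) : Unitization ℂ A)‖ ≤ ‖Φ0 T‖ * ‖a‖ := by
      rw [hkey j T a, norm_mul]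
      exact mul_le_mul (hrj j) (hchi a) (norm_nonneg _) hr0
    have h1 : ‖T.fst a‖ ≤ ‖d m‖ + ε/4 := by
      have h2 := norm_sub_norm_le (T.fst a) (d m)
      rw [norm_sub_rev] at h2
      linarith
    by_cases hcase : (1 / ((Nat.unpair j).2 + 1) : ℝ) < ‖d (Nat.unpair j).1‖
    · obtain ⟨hb, hbig⟩ := hcond j hcase
      rw [hjm] at hb
      rw [hjm, hjk, hb] at hbig
      have hsplit : ‖χs j ((d m : A) : Unitization ℂ A)‖
          ≤ ‖χs j ((T.fst a : A) : Unitization ℂ A)‖ + ε/4 := by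
        have heq : ((d m : A) : Unitization ℂ A)
            = ((T.fst a : A) : Unitization ℂ A) + ((d m - T.fst a : A) : Unitization ℂ A) := by
          rw [← Unitization.inr_add]
          norm_num
        calc ‖χs j ((d m : A) : Unitization ℂ A)‖
            = ‖χs j ((T.fst a : A) : Unitization ℂ A)
                + χs j ((d m - T.fst a : A) : Unitization ℂ A)‖ := by rw [← map_add, ← heq]
          _ ≤ ‖χs j ((T.fst a : A) : Unitization ℂ A)‖
                + ‖χs j ((d m - T.fst a : A) : Unitization ℂ A)‖ := norm_add_le _ _
          _ ≤ ‖χs j ((T.fst a : A) : Unitization ℂ A)‖ + ε/4 := by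
              have := (hchi (d m - T.fst a)).trans hm.le
              linarith
      have hk' : (1 : ℝ) / (k + 1) < ε/2 := hk
      linarith
    · rw [hjm, hjk] at hcase
      push_neg at hcase
      have hk' : (1 : ℝ) / (k + 1) < ε/2 := hk
      have hra : (0:ℝ) ≤ ‖Φ0 T‖ * ‖a‖ := mul_nonneg hr0 (norm_nonneg a)
      linarith
  have hnorm : ∀ T : 𝓜(ℂ, A), ‖Φ0 T‖ = ‖T‖ := fun T => le_antisymm (hle T) (hge T)
  have hz : ∀ j, es j (0 : 𝓜(ℂ, A)) = 0 := by
    intro j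
    have h := hsmul j 0 0
    rw [zero_smul, zero_mul] at h
    exact h
  refine ⟨{ toFun := Φ0
            map_smul' := by
              intro c T
              apply lp.ext
              funext n
              rw [lp.coeFn_smul]
              simp only [RingHom.id_apply, MonoidHom.id_apply, Pi.smul_apply, happ, hsmul,
                smul_eq_mul]
            map_zero' := by
              apply lp.ext
              funext n
              rw [lp.coeFn_zero]
              simp only [happ, hz, Pi.zero_apply]
            map_add' := by
              intro T S
              apply lp.ext
              funext n
              rw [lp.coeFn_add]
              simp only [Pi.add_apply, happ, hadd]
            map_mul' := by
              intro T S
              apply lp.ext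
              funext n
              rw [lp.infty_coeFn_mul]
              simp only [Pi.mul_apply, happ, hmul]
            map_star' := by
              intro T
              apply lp.ext
              funext n
              rw [lp.star_apply]
              simp only [happ, hstar] }, ?_, ?_, ?_⟩
  · exact AddMonoidHomClass.isometry_of_norm _ hnorm
  · exact (AddMonoidHomClass.isometry_of_norm _ hnorm).injective
  · rintro y ⟨T, rfl⟩ hy
    have hy' : Tendsto (fun n : ℕ => (Φ0 T : ∀ _ : ℕ, ℂ) n) atTop (𝓝 0) := hy
    have hzero : ∀ j, es j T = 0 := by
      intro j
      have hmono : Tendsto (fun t : ℕ => Nat.pair j t) atTop atTop :=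
        tendsto_atTop_mono (fun t => Nat.right_le_pair j t) tendsto_id
      have h2 : Tendsto (fun t : ℕ => (Φ0 T : ∀ _ : ℕ, ℂ) (Nat.pair j t)) atTop (𝓝 0) :=
        hy'.comp hmono
      have h3 : (fun t : ℕ => (Φ0 T : ∀ _ : ℕ, ℂ) (Nat.pair j t)) = fun _ => es j T := by
        funext t
        rw [happ, Nat.unpair_pair]
      rw [h3] at h2
      exact tendsto_nhds_unique tendsto_const_nhds h2
    have hle0 : ‖Φ0 T‖ ≤ 0 := by
      refine lp.norm_le_of_forall_le le_rfl fun n => ?_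
      rw [happ, hzero]
      simp
    exact norm_le_zero_iff.mp hle0
end
end

section
/- Let L be a locally compact Hausdorff topological space that is not compact, such that the C*-algebra C₀(L, ℂ) of continuous functions vanishing at infinity is separable and has no nonzero compact elements. Then there exists an isometric injective star-algebra homomorphism D from the C*-algebra C_b(L, ℂ) of bounded continuous functions (BoundedContinuousFunction L ℂ) into ℓ∞ such that the only element of the range of D lying in c0 is 0; moreover, the range of D (equivalently, C_b(L, ℂ)) is not a separable topological space. -/
open Filter Topology ZeroAtInfty ENNReal

noncomputable section

/-!
Separability of `C₀(L)` makes `L` second countable: approximations of bump functions by a countable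
dense family give a countable basis. Evaluating along a dense sequence in which every term recurs
infinitely often is then an isometric embedding `C_b(L) → ℓ∞` whose range meets `c₀` only at `0`.
Since `L` is σ-compact but not compact, a sequence escaping every compact set contains a closed
discrete copy of `ℕ`, and Tietze extensions of the indicators of the subsets of `ℕ` form an
uncountable `1`-separated family in `C_b(L)`.
-/

open BoundedContinuousFunction TopologicalSpace CompactlySupported

section SecondCountable

variable {L : Type*} [TopologicalSpace L] [LocallyCompactSpace L] [T2Space L]
  {𝕜 : Type*} [RCLike 𝕜]

theorem ZeroAtInftyContinuousMap.exists_eq_one_of_isOpen {U : Set L} (hU : IsOpen U) {x : L}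
    (hx : x ∈ U) : ∃ g : C₀(L, 𝕜), g x = 1 ∧ ∀ z ∉ U, g z = 0 := by
  obtain ⟨f, hfx, hfU, hcs, -⟩ := exists_continuous_one_zero_of_isCompact isCompact_singleton
    hU.isClosed_compl (Set.disjoint_singleton_left.2 (not_not.2 hx))
  let g : C_c(L, 𝕜) := ⟨⟨fun z => (f z : 𝕜), by fun_prop⟩, hcs.comp_left RCLike.ofReal_zero⟩
  exact ⟨g, by simp [g, hfx rfl], fun z hz => by simp [g, hfU hz]⟩

theorem secondCountableTopology_of_separableSpace_zeroAtInfty [SeparableSpace C₀(L, 𝕜)] :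
    SecondCountableTopology L := by
  obtain ⟨D, hDc, hDd⟩ := exists_countable_dense C₀(L, 𝕜)
  refine (isTopologicalBasis_of_isOpen_of_nhds
    (s := (fun g : C₀(L, 𝕜) => {z | 1 / 2 < ‖g z‖}) '' D) ?_ ?_).secondCountableTopology
    (hDc.image _)
  · rintro _ ⟨g, -, rfl⟩
    exact isOpen_lt continuous_const (map_continuous g).norm
  · intro x U hxU hU
    obtain ⟨g, hgx, hgU⟩ := ZeroAtInftyContinuousMap.exists_eq_one_of_isOpen (𝕜 := 𝕜) hU hxU
    obtain ⟨h, hhD, hhg⟩ := hDd.exists_dist_lt g one_half_pos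
    have hclose : ∀ z, ‖h z - g z‖ < 1 / 2 := fun z =>
      calc ‖h z - g z‖ ≤ ‖h - g‖ := (h - g).toBCF.norm_coe_le_norm z
        _ < 1 / 2 := by rwa [dist_comm, dist_eq_norm] at hhg
    refine ⟨_, ⟨h, hhD, rfl⟩, ?_, fun z hz => ?_⟩
    · have hgx' : ‖g x‖ = 1 := by simp [hgx]
      change 1 / 2 < ‖h x‖
      linarith [norm_sub_norm_le (g x) (h x), norm_sub_rev (g x) (h x), hclose x]
    · by_contra hzU
      have := hclose z
      rw [hgU z hzU, sub_zero] at this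
      exact lt_asymm hz this

end SecondCountable

section Evaluation

variable {L : Type*} [TopologicalSpace L]

def evalLinf (u : ℕ → L) : (L →ᵇ ℂ) →⋆ₙₐ[ℂ] linf where
  toFun f := ⟨fun n => f (u n),
    memℓp_infty ⟨‖f‖, by rintro _ ⟨n, rfl⟩; exact f.norm_coe_le_norm _⟩⟩
  map_smul' _ _ := rfl
  map_zero' := rfl
  map_add' _ _ := rfl
  map_mul' _ _ := rfl
  map_star' _ := rfl

@[simp]
theorem evalLinf_apply (u : ℕ → L) (f : L →ᵇ ℂ) (n : ℕ) : evalLinf u f n = f (u n) := rfl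

theorem norm_evalLinf {u : ℕ → L} (hu : DenseRange u) (f : L →ᵇ ℂ) :
    ‖evalLinf u f‖ = ‖f‖ := by
  rw [lp.norm_eq_ciSup, norm_eq_iSup_norm]
  simp only [evalLinf_apply]
  rw [← iSup_range' (fun x => ‖f x‖) u]
  exact hu.ciSup' f.continuous.norm

theorem isometry_evalLinf {u : ℕ → L} (hu : DenseRange u) : Isometry (evalLinf u) :=
  AddMonoidHomClass.isometry_of_norm _ (norm_evalLinf hu)

theorem eq_of_tendsto_comp_unpair_fst {X : Type*} [TopologicalSpace X] [T2Space X] {a : ℕ → X}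
    {c : X} (h : Tendsto (fun n : ℕ => a n.unpair.1) atTop (𝓝 c)) (k : ℕ) : a k = c := by
  have hpair : Tendsto (Nat.pair k) atTop atTop :=
    tendsto_atTop_mono (Nat.right_le_pair k) tendsto_id
  simpa [Function.comp_def] using h.comp hpair

theorem eq_zero_of_evalLinf_unpair_mem_c0 {v : ℕ → L} (hv : DenseRange v) {f : L →ᵇ ℂ}
    (hf : evalLinf (fun n => v n.unpair.1) f ∈ c0) : f = 0 := by
  have hfv : ⇑f ∘ v = 0 := funext (eq_of_tendsto_comp_unpair_fst (a := ⇑f ∘ v) hf)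
  exact DFunLike.coe_injective (hv.equalizer f.continuous continuous_const hfv)

theorem DenseRange.comp_unpair_fst {v : ℕ → L} (hv : DenseRange v) :
    DenseRange fun n : ℕ => v n.unpair.1 :=
  hv.comp (Prod.fst_surjective.comp Nat.surjective_unpair).denseRange continuous_of_discreteTopology

end Evaluation

theorem countable_of_pairwise_le_dist {X ι : Type*} [PseudoMetricSpace X] [SeparableSpace X]
    {f : ι → X} {ε : ℝ} (hε : 0 < ε) (hf : Pairwise fun i j => ε ≤ dist (f i) (f j)) :
    Countable ι :=
  Pairwise.countable_of_isOpen_disjoint (s := fun i => Metric.ball (f i) (ε / 2))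
    (fun i j hij => Metric.ball_disjoint_ball (by linarith [hf hij]))
    (fun _ => Metric.isOpen_ball) (fun i => ⟨f i, Metric.mem_ball_self (half_pos hε)⟩)

section NonSeparable

variable {L : Type*} [TopologicalSpace L] {𝕜 : Type*} [RCLike 𝕜]

theorem exists_tendsto_cocompact_nat [WeaklyLocallyCompactSpace L] [SigmaCompactSpace L]
    [NoncompactSpace L] : ∃ x : ℕ → L, Tendsto x atTop (cocompact L) := by
  let K := CompactExhaustion.choice L
  choose x hx using fun n => (Set.ne_univ_iff_exists_notMem _).1 (K.isCompact n).ne_univ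
  refine ⟨x, hasBasis_cocompact.tendsto_right_iff.2 fun C hC => ?_⟩
  obtain ⟨m, hm⟩ := K.exists_superset_of_isCompact hC
  exact eventually_atTop.2 ⟨m, fun n hn hxC => hx n (K.subset hn (hm hxC))⟩

theorem exists_isClosedEmbedding_nat [LocallyCompactSpace L] [T2Space L] [SigmaCompactSpace L]
    [NoncompactSpace L] : ∃ t : ℕ → L, IsClosedEmbedding t := by
  obtain ⟨x, hx⟩ := exists_tendsto_cocompact_nat (L := L)
  have hproper : IsProperMap x := isProperMap_iff_tendsto_cocompact.2
    ⟨continuous_of_discreteTopology, by rwa [cocompact_eq_atTop]⟩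
  have hinf : (Set.range x).Infinite := fun hfin => by
    simpa [isCompact_univ_iff, not_compactSpace_iff.2 inferInstance] using
      hproper.isCompact_preimage hfin.isCompact
  have := hinf.to_subtype
  let e := Infinite.natEmbedding (Set.range x)
  refine ⟨fun n => e n, .of_continuous_injective_isClosedMap continuous_of_discreteTopology
    (Subtype.val_injective.comp e.injective) fun C _ => ?_⟩
  -- every subset of `range x` is the image under the closed map `x` of a (closed) set of naturals
  rw [← Set.image_preimage_eq_of_subset (f := x) (s := (fun n => (e n : L)) '' C)
    (by rintro _ ⟨n, -, rfl⟩; exact (e n).2)]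
  exact hproper.isClosedMap _ (isClosed_discrete _)

theorem not_separableSpace_of_isClosedEmbedding_nat [NormalSpace L] {t : ℕ → L}
    (ht : IsClosedEmbedding t) : ¬ SeparableSpace (L →ᵇ 𝕜) := by
  intro hsep
  let χ (A : Set ℕ) : ℕ →ᵇ ℝ := mkOfDiscrete (A.indicator 1) 1 fun m n => by
    by_cases hm : m ∈ A <;> by_cases hn : n ∈ A <;> simp [hm, hn]
  choose g hg using fun A =>
    (exists_extension_norm_eq_of_isClosedEmbedding (χ A) ht).imp fun _ => And.right
  let G (A : Set ℕ) : L →ᵇ 𝕜 := (g A).comp _ (RCLike.ofRealLI (K := 𝕜)).lipschitz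
  have hG : Pairwise fun A B => 1 ≤ dist (G A) (G B) := fun A B hAB => by
    obtain ⟨n, hn⟩ := Set.symmDiff_nonempty.2 hAB
    calc (1 : ℝ) = dist (G A (t n)) (G B (t n)) := by
          change 1 = dist (RCLike.ofRealLI (g A (t n))) (RCLike.ofRealLI (g B (t n)))
          rw [LinearIsometry.dist_map, ← Function.comp_apply (f := g A),
            ← Function.comp_apply (f := g B), hg, hg]
          rcases hn with ⟨hA, hB⟩ | ⟨hB, hA⟩ <;> simp [χ, hA, hB]
      _ ≤ dist (G A) (G B) := dist_coe_le_dist _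
  obtain ⟨i, hi⟩ := (countable_of_pairwise_le_dist one_pos hG).exists_injective_nat
  exact Function.cantor_injective i hi

end NonSeparable

theorem exists_isometric_embedding_of_boundedContinuousFunctions_into_linf_general
    {L : Type*} [TopologicalSpace L] [LocallyCompactSpace L] [T2Space L]
    (hnc : ¬ CompactSpace L)
    [TopologicalSpace.SeparableSpace C₀(L, ℂ)] :
    (∃ D : BoundedContinuousFunction L ℂ →⋆ₙₐ[ℂ] linf,
      Isometry D ∧ Function.Injective D ∧ ∀ y ∈ Set.range D, y ∈ c0 → y = 0) ∧
      ¬ TopologicalSpace.SeparableSpace (BoundedContinuousFunction L ℂ) := by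
  have := secondCountableTopology_of_separableSpace_zeroAtInfty (L := L) (𝕜 := ℂ)
  have := not_compactSpace_iff.1 hnc
  have : Nonempty L := not_isEmpty_iff.1 fun _ => hnc inferInstance
  obtain ⟨v, hv⟩ := exists_dense_seq L
  obtain ⟨t, ht⟩ := exists_isClosedEmbedding_nat (L := L)
  have hiso := isometry_evalLinf hv.comp_unpair_fst
  refine ⟨⟨evalLinf _, hiso, hiso.injective, ?_⟩, not_separableSpace_of_isClosedEmbedding_nat ht⟩
  rintro _ ⟨f, rfl⟩ hf
  rw [eq_zero_of_evalLinf_unpair_mem_c0 hv hf, map_zero]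

/-- **Corollary 2.12.** If `L` is a locally compact non-compact Hausdorff space such that
`C₀(L, ℂ)` is separable and has no nonzero compact elements, then the C*-algebra
`C_b(L, ℂ)` of bounded continuous functions embeds isometrically and star-algebraically
into `ℓ∞` with range meeting `c₀` only at `0`; in particular `C_b(L, ℂ)` is not separable. -/
theorem exists_isometric_embedding_of_boundedContinuousFunctions_into_linf
    {L : Type*} [TopologicalSpace L] [LocallyCompactSpace L] [T2Space L]
    (hnc : ¬ CompactSpace L)
    [TopologicalSpace.SeparableSpace C₀(L, ℂ)]
    (hK : ∀ a : C₀(L, ℂ), IsCompactOperator (fun x : C₀(L, ℂ) => a * x * a) → a = 0) :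
    (∃ D : BoundedContinuousFunction L ℂ →⋆ₙₐ[ℂ] linf,
      Isometry D ∧ Function.Injective D ∧ ∀ y ∈ Set.range D, y ∈ c0 → y = 0) ∧
      ¬ TopologicalSpace.SeparableSpace (BoundedContinuousFunction L ℂ) :=
  exists_isometric_embedding_of_boundedContinuousFunctions_into_linf_general hnc
end
end

section
/- Let f ∈ ℓ∞ and let T : ℓ² →L[ℂ] ℓ² be a continuous linear map satisfying (T g) n = f n * g n for every g ∈ ℓ² and every n ∈ ℕ (i.e. T is the multiplication operator by f). Then T is a compact operator if and only if Tendsto (fun n => f n) atTop (𝓝 0), i.e. if and only if f ∈ c0. -/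
/-! If `f → 0`, then `T` is the operator-norm limit of its truncations to the first `N`
coordinates, which have finite rank, so `T` is compact. Conversely, `T` sends the unit vector
`eₙ` to `f n • eₙ`; these images lie in a compact set and tend to `0` coordinatewise, and on a
compact subset of `ℓᵖ` coordinatewise convergence is norm convergence, so `‖f n‖ = ‖T eₙ‖ → 0`. -/

open Filter Topology ENNReal

noncomputable section

/-- `ℓ²`, the square-summable complex sequences. -/
abbrev ltwo : Type := lp (fun _ : ℕ => ℂ) 2

lemma isCompactOperator_smulRight {𝕜 E F : Type*} [NontriviallyNormedField 𝕜] [ProperSpace 𝕜]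
    [NormedAddCommGroup E] [NormedSpace 𝕜 E] [NormedAddCommGroup F] [NormedSpace 𝕜 F]
    (c : E →L[𝕜] 𝕜) (x : F) : IsCompactOperator (c.smulRight x) := by
  have h : ⇑(c.smulRight x) = (ContinuousLinearMap.smulRight (1 : 𝕜 →L[𝕜] 𝕜) x) ∘ c := by
    ext
    simp
  rw [h]
  exact (isCompactOperator_of_locallyCompactSpace_dom c).clm_comp _

namespace lp

variable {E : ℕ → Type*} [∀ i, NormedAddCommGroup (E i)] {p : ℝ≥0∞} [Fact (1 ≤ p)]

theorem tendsto_of_isCompact_of_tendsto_apply {K : Set (lp E p)} (hK : IsCompact K)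
    {u : ℕ → lp E p} (hu : ∀ k, u k ∈ K) {x : lp E p}
    (hux : ∀ i, Tendsto (fun k => u k i) atTop (𝓝 (x i))) : Tendsto u atTop (𝓝 x) := by
  refine tendsto_of_subseq_tendsto fun φ hφ => ?_
  obtain ⟨y, -, ψ, hψ, hy⟩ := hK.tendsto_subseq fun k => hu (φ k)
  have hy_apply : ∀ i, Tendsto (fun k => u (φ (ψ k)) i) atTop (𝓝 (y i)) := fun i =>
    ((continuous_apply i).comp uniformContinuous_coe.continuous).continuousAt.tendsto.comp hy
  have hxy : x = y := lp.ext <| funext fun i =>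
    tendsto_nhds_unique ((hux i).comp (hφ.comp hψ.tendsto_atTop)) (hy_apply i)
  exact ⟨ψ, hxy ▸ hy⟩

end lp

section Diagonal

variable {𝕜 : Type*} [NontriviallyNormedField 𝕜] {p : ℝ≥0∞} [Fact (1 ≤ p)]
  {T : lp (fun _ : ℕ => 𝕜) p →L[𝕜] lp (fun _ : ℕ => 𝕜) p} {f : ℕ → 𝕜}

theorem apply_single_of_apply_eq_mul (hT : ∀ g n, T g n = f n * g n) (n : ℕ) (c : 𝕜) :
    T (lp.single p n c) = lp.single p n (f n * c) := by
  ext m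
  rw [hT, lp.single_apply, lp.single_apply, Pi.single_apply, Pi.single_apply]
  split_ifs with h
  · rw [h]
  · rw [mul_zero]

theorem tendsto_zero_of_isCompactOperator (hT : ∀ g n, T g n = f n * g n)
    (hc : IsCompactOperator T) : Tendsto f atTop (𝓝 0) := by
  have hp : 0 < p := zero_lt_one.trans_le Fact.out
  have hTe : ∀ n, T (lp.single p n 1) = lp.single p n (f n) := fun n => by
    rw [apply_single_of_apply_eq_mul hT, mul_one]
  have hTe_mem : ∀ n, T (lp.single p n 1) ∈ closure (T '' Metric.closedBall 0 1) := fun n =>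
    subset_closure ⟨_, by simp [lp.norm_single hp], rfl⟩
  have hTe_apply : ∀ i, Tendsto (fun n => T (lp.single p n 1) i) atTop (𝓝 0) := fun i => by
    refine tendsto_const_nhds.congr' ?_
    filter_upwards [eventually_ne_atTop i] with n hn
    rw [hTe, lp.single_apply_ne _ _ _ hn.symm]
  have hTe_lim := lp.tendsto_of_isCompact_of_tendsto_apply
    (hc.isCompact_closure_image_closedBall 1) hTe_mem (x := 0) hTe_apply
  rw [tendsto_zero_iff_norm_tendsto_zero]
  simpa only [hTe, lp.norm_single hp, norm_zero] using hTe_lim.norm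

end Diagonal

section Truncation

variable {𝕜 : Type*} [RCLike 𝕜] {p : ℝ≥0∞} [Fact (1 ≤ p)]
  {T : lp (fun _ : ℕ => 𝕜) p →L[𝕜] lp (fun _ : ℕ => 𝕜) p} {f : ℕ → 𝕜}

variable (p) in
def truncDiagonal (f : ℕ → 𝕜) (N : ℕ) : lp (fun _ : ℕ => 𝕜) p →L[𝕜] lp (fun _ : ℕ => 𝕜) p :=
  ∑ i ∈ Finset.range N, (lp.evalCLM 𝕜 (fun _ => 𝕜) p i).smulRight (lp.single p i (f i))

theorem truncDiagonal_apply_apply (f : ℕ → 𝕜) (N : ℕ) (g : lp (fun _ : ℕ => 𝕜) p) (n : ℕ) :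
    truncDiagonal p f N g n = if n < N then f n * g n else 0 := by
  simp only [truncDiagonal, sum_apply, ContinuousLinearMap.smulRight_apply, lp.coeFn_sum,
    Finset.sum_apply, lp.coeFn_smul, Pi.smul_apply, lp.single_apply, Pi.single_apply, smul_eq_mul,
    mul_comm, ite_mul, zero_mul, Finset.sum_ite_eq, Finset.mem_range]
  rfl

theorem isCompactOperator_truncDiagonal (f : ℕ → 𝕜) (N : ℕ) :
    IsCompactOperator (truncDiagonal p f N) :=
  Submodule.sum_mem (compactOperator _ _ _) fun _ _ => isCompactOperator_smulRight _ _

theorem norm_sub_truncDiagonal_le (hT : ∀ g n, T g n = f n * g n) {N : ℕ} {ε : ℝ} (hε : 0 ≤ ε)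
    (hf : ∀ n ≥ N, ‖f n‖ ≤ ε) : ‖T - truncDiagonal p f N‖ ≤ ε := by
  have hp : p ≠ 0 := (zero_lt_one.trans_le Fact.out).ne'
  refine ContinuousLinearMap.opNorm_le_bound _ hε fun g => ?_
  calc ‖(T - truncDiagonal p f N) g‖ ≤ ‖(ε : 𝕜) • g‖ := lp.norm_mono hp fun n => by
        rw [sub_apply, lp.coeFn_sub, Pi.sub_apply, hT, truncDiagonal_apply_apply, lp.coeFn_smul,
          Pi.smul_apply, norm_smul, RCLike.norm_of_nonneg hε]
        split_ifs with hn
        · rw [sub_self, norm_zero]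
          positivity
        · rw [sub_zero, norm_mul]
          exact mul_le_mul_of_nonneg_right (hf n (not_lt.1 hn)) (norm_nonneg _)
    _ = ε * ‖g‖ := by rw [norm_smul, RCLike.norm_of_nonneg hε]

theorem tendsto_truncDiagonal (hT : ∀ g n, T g n = f n * g n) (hf : Tendsto f atTop (𝓝 0)) :
    Tendsto (truncDiagonal p f) atTop (𝓝 T) := by
  refine Metric.tendsto_atTop.2 fun ε hε => ?_
  obtain ⟨N₀, hN₀⟩ := eventually_atTop.1 <| NormedAddGroup.tendsto_nhds_zero.1 hf _ (half_pos hε)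
  refine ⟨N₀, fun N hN => ?_⟩
  rw [dist_comm, dist_eq_norm]
  calc ‖T - truncDiagonal p f N‖ ≤ ε / 2 :=
        norm_sub_truncDiagonal_le hT (half_pos hε).le fun n hn => (hN₀ n (hN.trans hn)).le
    _ < ε := half_lt_self hε

theorem isCompactOperator_of_tendsto_zero (hT : ∀ g n, T g n = f n * g n)
    (hf : Tendsto f atTop (𝓝 0)) : IsCompactOperator T :=
  isCompactOperator_of_tendsto (tendsto_truncDiagonal hT hf)
    (Eventually.of_forall (isCompactOperator_truncDiagonal f))

end Truncation

/-- The multiplication operator on `ℓ²` by a bounded sequence `f ∈ ℓ∞` is a compact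
operator iff `f` tends to `0`, i.e. iff `f ∈ c₀`. -/
theorem isCompactOperator_mul_iff_tendsto_zero
    (f : linf) (T : ltwo →L[ℂ] ltwo)
    (hT : ∀ (g : ltwo) (n : ℕ), (T g : ∀ _ : ℕ, ℂ) n = (f : ∀ _ : ℕ, ℂ) n * (g : ∀ _ : ℕ, ℂ) n) :
    IsCompactOperator T ↔ Tendsto (fun n => (f : ∀ _ : ℕ, ℂ) n) atTop (𝓝 0) :=
  ⟨tendsto_zero_of_isCompactOperator hT, isCompactOperator_of_tendsto_zero hT⟩
end
end

section
/- Let A be a nontrivial commutative unital C*-algebra. For every cardinal number κ, the following are equivalent: (i) there exists a set S of self-adjoint elements of A with Cardinal.mk S = κ that generates A as a C*-algebra; (ii) κ ≤ Cardinal.mk C(Δ(A), ℂ) and there exist a type ι with Cardinal.mk ι = κ and a map f : Δ(A) → (ι → ℝ) that is a topological embedding (IsEmbedding f), where ι → ℝ carries the product topology. -/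
/-!
A self-adjoint generating set `S` gives the embedding `φ ↦ (Re φ(s))_{s ∈ S}` of `Δ(A)` into
`ℝ^S`: characters take real values on self-adjoint elements, and two characters agreeing on `S`
agree on the closure of the algebra it generates. Conversely, the coordinates of an embedding
`Δ(A) → ℝ^ι` are real-valued continuous functions separating points, so by Stone–Weierstrass they
generate `C(Δ(A), ℂ)`, and the Gelfand isomorphism pulls them back to self-adjoint generators of
`A`. Since `#A = #C(Δ(A), ℂ)` equals the number of self-adjoint elements of `A`, this generating
set can then be enlarged by further self-adjoint elements to have any cardinality
`κ ≤ #C(Δ(A), ℂ)`.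
-/

open Topology WeakDual Cardinal Set

universe u

theorem Set.exists_superset_subset_mk_eq {α : Type u} {s t : Set α} {κ : Cardinal.{u}}
    (hst : s ⊆ t) (hs : #s ≤ κ) (ht : κ ≤ #t) : ∃ r, s ⊆ r ∧ r ⊆ t ∧ #r = κ := by
  rcases le_or_gt ℵ₀ κ with hκ | hκ
  · obtain ⟨w, hwt, hw⟩ := le_mk_iff_exists_subset.mp ht
    refine ⟨s ∪ w, subset_union_left, union_subset hst hwt, le_antisymm ?_ ?_⟩
    · calc #↥(s ∪ w) ≤ #s + #w := mk_union_le s w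
        _ ≤ κ + κ := by rw [hw]; gcongr
        _ = κ := add_eq_self hκ
    · exact hw ▸ mk_le_mk_of_subset subset_union_right
  · obtain ⟨n, rfl⟩ := lt_aleph0.mp hκ
    obtain ⟨r, hsr, hrt, hr⟩ := exists_superset_subset_encard_eq (k := n) hst
      (by simpa using OrderHomClass.mono toENat hs) (by simpa using OrderHomClass.mono toENat ht)
    exact ⟨r, hsr, hrt, toENat_eq_natCast.mp hr⟩

theorem Cardinal.mk_setOf_isSelfAdjoint {A : Type*} [Ring A] [StarRing A] [Algebra ℂ A]
    [StarModule ℂ A] [Nontrivial A] : #{a : A | IsSelfAdjoint a} = #A := by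
  set sa := {a : A | IsSelfAdjoint a}
  have : Infinite sa := .of_injective (fun r : ℝ => ⟨algebraMap ℝ A r, .algebraMap A (.all r)⟩)
    fun r s h => (algebraMap ℝ A).injective (congrArg Subtype.val h)
  have hparts : Function.Injective fun a : A => ((realPart a : sa), (imaginaryPart a : sa)) := by
    intro a b h
    simp only [Prod.mk.injEq] at h
    rw [← realPart_add_I_smul_imaginaryPart a, ← realPart_add_I_smul_imaginaryPart b, h.1, h.2]
  refine le_antisymm (mk_set_le sa) ?_
  calc #A ≤ #(sa × sa) := mk_le_of_injective hparts
    _ = #sa := by rw [mk_prod, lift_id, mul_eq_self (aleph0_le_mk sa)]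

theorem AlgHomClass.ext_of_topologicalClosure_adjoin_eq_top {R A B F : Type*} [CommSemiring R]
    [Semiring A] [Algebra R A] [TopologicalSpace A] [IsSemitopologicalSemiring A]
    [Semiring B] [Algebra R B] [TopologicalSpace B] [T2Space B]
    [FunLike F A B] [AlgHomClass F R A B] [ContinuousMapClass F A B]
    {s : Set A} (hs : (Algebra.adjoin R s).topologicalClosure = ⊤) {φ ψ : F}
    (h : s.EqOn φ ψ) : φ = ψ := by
  have hadjoin :
      Algebra.adjoin R s ≤ AlgHom.equalizer (AlgHomClass.toAlgHom φ) (AlgHomClass.toAlgHom ψ) :=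
    Algebra.adjoin_le h
  have hclosure : EqOn φ ψ (closure (Algebra.adjoin R s)) :=
    EqOn.closure hadjoin (map_continuous φ) (map_continuous ψ)
  refine DFunLike.ext _ _ fun a => hclosure ?_
  rw [← Subalgebra.topologicalClosure_coe, hs]
  trivial

theorem WeakDual.CharacterSpace.isEmbedding_re_apply {A : Type*} [CommCStarAlgebra A]
    {S : Set A} (hsa : ∀ a ∈ S, IsSelfAdjoint a)
    (hS : (Algebra.adjoin ℂ S).topologicalClosure = ⊤) :
    IsEmbedding fun (φ : characterSpace ℂ A) (a : S) => (φ a).re := by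
  have hcont : Continuous fun (φ : characterSpace ℂ A) (a : S) => (φ a).re :=
    continuous_pi fun a =>
      Complex.continuous_re.comp ((eval_continuous (a : A)).comp continuous_subtype_val)
  refine (hcont.isClosedEmbedding fun φ ψ h => ?_).isEmbedding
  refine AlgHomClass.ext_of_topologicalClosure_adjoin_eq_top hS fun a ha => ?_
  have him (χ : characterSpace ℂ A) : (χ a).im = 0 :=
    (Complex.im_eq_zero_iff_isSelfAdjoint _).mpr ((hsa a ha).map χ)
  exact Complex.ext (congrFun h ⟨a, ha⟩) ((him φ).trans (him ψ).symm)

theorem ContinuousMap.topologicalClosure_adjoin_eq_top_of_isSelfAdjoint {𝕜 X : Type*} [RCLike 𝕜]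
    [TopologicalSpace X] [CompactSpace X] {s : Set C(X, 𝕜)} (hsa : ∀ g ∈ s, IsSelfAdjoint g)
    (hsep : ∀ x y, x ≠ y → ∃ g ∈ s, g x ≠ g y) : (Algebra.adjoin 𝕜 s).topologicalClosure = ⊤ := by
  have hstar : star s ⊆ s := fun g hg => by
    have hg' : g = star g := by simpa using (hsa _ hg).star_eq
    rw [hg']
    exact hg
  have hadjoin : (StarAlgebra.adjoin 𝕜 s).toSubalgebra = Algebra.adjoin 𝕜 s := by
    rw [StarAlgebra.adjoin_toSubalgebra, union_eq_left.mpr hstar]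
  have hsep' : (StarAlgebra.adjoin 𝕜 s).SeparatesPoints := fun x y hxy => by
    obtain ⟨g, hg, hne⟩ := hsep x y hxy
    exact ⟨g, ⟨g, StarAlgebra.subset_adjoin 𝕜 s hg, rfl⟩, hne⟩
  rw [← hadjoin, ← StarSubalgebra.topologicalClosure_toSubalgebra_comm,
    starSubalgebra_topologicalClosure_eq_top_of_separatesPoints _ hsep',
    StarSubalgebra.top_toSubalgebra]

theorem ContinuousMap.exists_isSelfAdjoint_topologicalClosure_adjoin_range_eq_top
    {𝕜 X ι : Type*} [RCLike 𝕜] [TopologicalSpace X] [CompactSpace X] {f : X → ι → ℝ}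
    (hf : Continuous f) (hinj : Function.Injective f) :
    ∃ g : ι → C(X, 𝕜), (∀ i, IsSelfAdjoint (g i)) ∧
      (Algebra.adjoin 𝕜 (range g)).topologicalClosure = ⊤ := by
  let g (i : ι) : C(X, 𝕜) := ⟨fun x => (f x i : 𝕜), by fun_prop⟩
  have hsa (i : ι) : IsSelfAdjoint (g i) := by ext x; simp [g]
  refine ⟨g, hsa, topologicalClosure_adjoin_eq_top_of_isSelfAdjoint
    (forall_mem_range.mpr hsa) fun x y hxy => ?_⟩
  obtain ⟨i, hi⟩ := Function.ne_iff.mp (hinj.ne hxy)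
  exact ⟨g i, mem_range_self i, by simpa [g] using hi⟩

theorem DenseRange.topologicalClosure_adjoin_image_eq_top {R A B : Type*} [CommSemiring R]
    [Semiring A] [Algebra R A] [TopologicalSpace A] [IsSemitopologicalSemiring A]
    [Semiring B] [Algebra R B] [TopologicalSpace B] [IsSemitopologicalSemiring B]
    {f : A →A[R] B} (hf : DenseRange f) {s : Set A}
    (hs : (Algebra.adjoin R s).topologicalClosure = ⊤) :
    (Algebra.adjoin R (f '' s)).topologicalClosure = ⊤ := by
  simpa only [AlgHom.map_adjoin, ContinuousAlgHom.coe_coe] using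
    hf.topologicalClosure_map_subalgebra hs

theorem WeakDual.CharacterSpace.exists_isSelfAdjoint_topologicalClosure_adjoin_range_eq_top
    {A ι : Type*} [CommCStarAlgebra A] {f : characterSpace ℂ A → ι → ℝ} (hf : Continuous f)
    (hinj : Function.Injective f) :
    ∃ a : ι → A, (∀ i, IsSelfAdjoint (a i)) ∧
      (Algebra.adjoin ℂ (range a)).topologicalClosure = ⊤ := by
  obtain ⟨g, hsa, hg⟩ :=
    ContinuousMap.exists_isSelfAdjoint_topologicalClosure_adjoin_range_eq_top (𝕜 := ℂ) hf hinj
  let e := (gelfandStarTransform A).symm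
  let e' : C(characterSpace ℂ A, ℂ) →A[ℂ] A := ⟨e, (StarAlgEquiv.isometry e).continuous⟩
  refine ⟨e ∘ g, fun i => (hsa i).map e, ?_⟩
  rw [range_comp]
  exact DenseRange.topologicalClosure_adjoin_image_eq_top (f := e') e.surjective.denseRange hg

/-- **Theorem 3.10.** For a nontrivial commutative unital C*-algebra `A` and a cardinal `κ`,
`A` has a generating set (as a C*-algebra) of self-adjoint elements of cardinality `κ` iff
`κ ≤ #C(Δ(A), ℂ)` and the character space `Δ(A)` embeds topologically into `ℝ^κ`. -/
theorem exists_selfAdjoint_generating_set_iff_embedding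
    {A : Type u} [CommCStarAlgebra A] [Nontrivial A] (κ : Cardinal.{u}) :
    (∃ S : Set A, (∀ a ∈ S, IsSelfAdjoint a) ∧ Cardinal.mk S = κ ∧
        (Algebra.adjoin ℂ S).topologicalClosure = ⊤) ↔
      (κ ≤ Cardinal.mk C(characterSpace ℂ A, ℂ) ∧
        ∃ (ι : Type u) (f : characterSpace ℂ A → (ι → ℝ)),
          Cardinal.mk ι = κ ∧ IsEmbedding f) := by
  rw [mk_congr (gelfandStarTransform A).toEquiv.symm]
  constructor
  · rintro ⟨S, hsa, rfl, hS⟩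
    exact ⟨mk_set_le S, S, _, rfl, CharacterSpace.isEmbedding_re_apply hsa hS⟩
  · rintro ⟨hκ, ι, f, rfl, hf⟩
    obtain ⟨a, hsa, ha⟩ :=
      CharacterSpace.exists_isSelfAdjoint_topologicalClosure_adjoin_range_eq_top hf.continuous
        hf.injective
    obtain ⟨S, haS, hSsa, hS⟩ := exists_superset_subset_mk_eq (t := {a : A | IsSelfAdjoint a})
      (range_subset_iff.mpr hsa) mk_range_le (hκ.trans mk_setOf_isSelfAdjoint.ge)
    exact ⟨S, hSsa, hS,
      eq_top_mono (Subalgebra.topologicalClosure_mono (Algebra.adjoin_mono haS)) ha⟩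
end

section
/- Let A be a commutative unital C*-algebra that is not finitely generated as a C*-algebra, i.e. no finite set of self-adjoint elements generates A as a C*-algebra. Then the following three cardinals coincide: (a) the least cardinality of a dense subset of A (sInf of Cardinal.mk s over sets s ⊆ A with Dense s); (b) the least cardinality of a set S of self-adjoint elements that generates A as a C*-algebra; (c) the least cardinality of a topological basis of the character space Δ(A) (sInf of Cardinal.mk 𝔅 over families 𝔅 of open sets with IsTopologicalBasis 𝔅). -/
/-!
All three cardinals are infinite because `A` is not finitely generated, and each one bounds the
next. Adjoining a countable dense set of scalars to a generating set `S` and taking the generated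
`ℤ`-algebra gives a dense set of size `#S`. If `s` is dense, characters agreeing on `s` are equal,
so by compactness `Δ(A)` carries the initial topology of the evaluations at points of `s`, and
pulling back a countable basis of `ℂ` gives a subbasis of size `#s`. Finally, given a basis `𝔅`,
the Urysohn functions of the pairs `U, V ∈ 𝔅` with `closure U ⊆ V` are real-valued and separate
the points of `Δ(A)`, so by Stone–Weierstrass and Gelfand duality they generate `A`.
-/

open Topology WeakDual

universe u

open Cardinal TopologicalSpace

lemma exists_isTopologicalBasis_mk_le_of_eq_generateFrom {X : Type*} [t : TopologicalSpace X]
    {𝒮 : Set (Set X)} (h𝒮 : t = generateFrom 𝒮) {κ : Cardinal} (hκ : ℵ₀ ≤ κ)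
    (h𝒮κ : #𝒮 ≤ κ) : ∃ 𝔅 : Set (Set X), IsTopologicalBasis 𝔅 ∧ #𝔅 ≤ κ := by
  refine ⟨_, isTopologicalBasis_of_subbasis h𝒮, ?_⟩
  have hfin : {f : Set (Set X) | f.Finite ∧ f ⊆ 𝒮} ⊆
      Set.range fun t : Finset 𝒮 => Subtype.val '' (t : Set 𝒮) := by
    rintro f ⟨hf, hf𝒮⟩
    refine ⟨(hf.preimage Subtype.val_injective.injOn).toFinset, ?_⟩
    simpa using hf𝒮
  calc #((fun f => ⋂₀ f) '' {f : Set (Set X) | f.Finite ∧ f ⊆ 𝒮})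
      ≤ #{f : Set (Set X) | f.Finite ∧ f ⊆ 𝒮} := mk_image_le
    _ ≤ #(Finset 𝒮) := (mk_le_mk_of_subset hfin).trans mk_range_le
    _ ≤ #(List 𝒮) := mk_le_of_surjective List.toFinset_surjective
    _ ≤ κ := (mk_list_le_max _).trans (max_le hκ h𝒮κ)

theorem Topology.IsInducing.eq_generateFrom_iUnion_preimage {X ι Y : Type*}
    [tX : TopologicalSpace X] [TopologicalSpace Y] {f : ι → X → Y}
    (hf : IsInducing fun x i => f i x) {B : Set (Set Y)} (hB : IsTopologicalBasis B) :
    tX = generateFrom (⋃ i, (f i ⁻¹' ·) '' B) := by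
  rw [hf.eq_induced, generateFrom_iUnion, Pi.topologicalSpace, induced_iInf]
  refine iInf_congr fun i => ?_
  rw [induced_compose, hB.eq_generateFrom, induced_generateFrom_eq]
  rfl

lemma exists_isTopologicalBasis_mk_le_of_injective {X ι : Type u} {Y : Type*} [TopologicalSpace X]
    [CompactSpace X] [TopologicalSpace Y] [T2Space Y] [SecondCountableTopology Y]
    {f : ι → X → Y} (hf : ∀ i, Continuous (f i)) (hinj : Function.Injective fun x i => f i x)
    (hι : ℵ₀ ≤ #ι) : ∃ 𝔅 : Set (Set X), IsTopologicalBasis 𝔅 ∧ #𝔅 ≤ #ι := by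
  obtain ⟨B, hBc, -, hB⟩ := exists_countable_basis Y
  have hind : IsInducing fun x i => f i x :=
    ((continuous_pi hf).isClosedEmbedding hinj).isInducing
  refine exists_isTopologicalBasis_mk_le_of_eq_generateFrom
    (hind.eq_generateFrom_iUnion_preimage hB) hι ?_
  calc #(⋃ i, (f i ⁻¹' ·) '' B) ≤ #ι * ⨆ i, #((f i ⁻¹' ·) '' B) := mk_iUnion_le _
    _ ≤ #ι * ℵ₀ := by
        gcongr
        exact ciSup_le' fun i => mk_le_aleph0_iff.2 (hBc.image _).to_subtype
    _ = #ι := mul_aleph0_eq hι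

lemma Dense.aleph0_le_mk {X : Type*} [TopologicalSpace X] [T1Space X] (hX : ℵ₀ ≤ #X)
    {s : Set X} (hs : Dense s) : ℵ₀ ≤ #s := by
  refine not_lt.1 fun h => ?_
  have hs_univ : s = Set.univ := by
    rw [← hs.closure_eq, (lt_aleph0_iff_set_finite.1 h).isClosed.closure_eq]
  rw [hs_univ, mk_univ] at h
  exact h.not_ge hX

section
variable {X : Type*} [TopologicalSpace X] [T4Space X]

lemma exists_separating_family_of_isTopologicalBasis {𝔅 : Set (Set X)}
    (h𝔅 : IsTopologicalBasis 𝔅) :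
    ∃ f : 𝔅 × 𝔅 → C(X, ℝ), ∀ x y, x ≠ y → ∃ p, f p x ≠ f p y := by
  -- Stated as an implication so that `choose` applies; only pairs with `closure U ⊆ V` are used.
  have hUrysohn : ∀ p : 𝔅 × 𝔅, ∃ f : C(X, ℝ), closure (p.1 : Set X) ⊆ p.2 →
      Set.EqOn f 0 (closure p.1) ∧ Set.EqOn f 1 (p.2 : Set X)ᶜ := by
    rintro ⟨⟨U, -⟩, ⟨V, hV⟩⟩
    by_cases hUV : closure U ⊆ V
    · obtain ⟨f, hf0, hf1, -⟩ := exists_continuous_zero_one_of_isClosed isClosed_closure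
        (h𝔅.isOpen hV).isClosed_compl (Set.disjoint_compl_right_iff_subset.2 hUV)
      exact ⟨f, fun _ => ⟨hf0, hf1⟩⟩
    · exact ⟨0, fun h => absurd h hUV⟩
  choose f hf using hUrysohn
  refine ⟨f, fun x y hxy => ?_⟩
  obtain ⟨V, hV, hxV, hVy⟩ :=
    h𝔅.exists_subset_of_mem_open (show x ∈ ({y}ᶜ : Set X) from hxy) isOpen_compl_singleton
  obtain ⟨U, hU, hxU, hUV⟩ := h𝔅.exists_closure_subset (h𝔅.mem_nhds hV hxV)
  obtain ⟨h0, h1⟩ := hf (⟨U, hU⟩, ⟨V, hV⟩) hUV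
  refine ⟨(⟨U, hU⟩, ⟨V, hV⟩), ?_⟩
  rw [h0 (subset_closure hxU), h1 fun hy => hVy hy rfl]
  exact zero_ne_one

end

namespace ContinuousMap
variable {X : Type*} [TopologicalSpace X] [CompactSpace X]

lemma adjoin_topologicalClosure_eq_top_of_separatesPoints {T : Set C(X, ℂ)}
    (hT : ∀ f ∈ T, IsSelfAdjoint f) (hsep : ∀ x y, x ≠ y → ∃ f ∈ T, f x ≠ f y) :
    (Algebra.adjoin ℂ T).topologicalClosure = ⊤ := by
  have hstar : T ∪ star T = T := Set.union_eq_left.2 fun f (hf : star f ∈ T) => by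
    rwa [← star_star f, (hT _ hf).star_eq]
  have hSW := starSubalgebra_topologicalClosure_eq_top_of_separatesPoints
    (StarAlgebra.adjoin ℂ T) fun x y hxy =>
      let ⟨f, hf, hfxy⟩ := hsep x y hxy
      ⟨f, ⟨f, StarAlgebra.subset_adjoin ℂ T hf, rfl⟩, hfxy⟩
  rw [← hstar, ← StarAlgebra.adjoin_toSubalgebra,
    ← StarSubalgebra.topologicalClosure_toSubalgebra_comm, hSW, StarSubalgebra.top_toSubalgebra]

lemma exists_selfAdjoint_generating_mk_le [T2Space X] {𝔅 : Set (Set X)}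
    (h𝔅 : IsTopologicalBasis 𝔅) :
    ∃ T : Set C(X, ℂ), (∀ f ∈ T, IsSelfAdjoint f) ∧
      (Algebra.adjoin ℂ T).topologicalClosure = ⊤ ∧ #T ≤ #𝔅 * #𝔅 := by
  obtain ⟨f, hf⟩ := exists_separating_family_of_isTopologicalBasis h𝔅
  let g : 𝔅 × 𝔅 → C(X, ℂ) := fun p => ⟨fun x => (f p x : ℂ), by fun_prop⟩
  have hg : ∀ p, IsSelfAdjoint (g p) := fun p => by ext x; simp [g, Complex.conj_ofReal]
  refine ⟨Set.range g, Set.forall_mem_range.2 hg,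
    adjoin_topologicalClosure_eq_top_of_separatesPoints (Set.forall_mem_range.2 hg) ?_, ?_⟩
  · intro x y hxy
    obtain ⟨p, hp⟩ := hf x y hxy
    exact ⟨g p, ⟨p, rfl⟩, by simpa [g] using hp⟩
  · simpa using mk_range_le (f := g)

end ContinuousMap

section
variable {𝕜 A : Type*} [CommRing 𝕜] [TopologicalSpace 𝕜] [Ring A] [TopologicalSpace A]
  [IsTopologicalRing A] [Algebra 𝕜 A] [ContinuousSMul 𝕜 A]

lemma dense_adjoin_int_union_image_algebraMap {D : Set 𝕜} (hD : Dense D) {S : Set A}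
    (hS : (Algebra.adjoin 𝕜 S).topologicalClosure = ⊤) :
    Dense (Algebra.adjoin ℤ (S ∪ algebraMap 𝕜 A '' D) : Set A) := by
  set R := Algebra.adjoin ℤ (S ∪ algebraMap 𝕜 A '' D)
  have halg : ∀ z, algebraMap 𝕜 A z ∈ R.topologicalClosure := fun z =>
    map_mem_closure (continuous_algebraMap 𝕜 A) (hD z) fun z hz =>
      Algebra.subset_adjoin (Or.inr ⟨z, hz, rfl⟩)
  let K : Subalgebra 𝕜 A := { R.topologicalClosure.toSubsemiring with algebraMap_mem' := halg }
  have hK : (Algebra.adjoin 𝕜 S).topologicalClosure ≤ K :=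
    Subalgebra.topologicalClosure_minimal
      (Algebra.adjoin_le fun a ha => R.le_topologicalClosure (Algebra.subset_adjoin (Or.inl ha)))
      R.isClosed_topologicalClosure
  rw [hS] at hK
  exact dense_iff_closure_eq.2 (Set.eq_univ_of_forall fun a => hK Algebra.mem_top)

lemma exists_dense_mk_le_of_adjoin_topologicalClosure_eq_top {A : Type*} [Ring A]
    [TopologicalSpace A] [IsTopologicalRing A] [Algebra 𝕜 A] [ContinuousSMul 𝕜 A]
    [SeparableSpace 𝕜] {S : Set A} (hS : (Algebra.adjoin 𝕜 S).topologicalClosure = ⊤)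
    (hSinf : ℵ₀ ≤ #S) : ∃ s : Set A, Dense s ∧ #s ≤ #S := by
  obtain ⟨D, hDc, hD⟩ := exists_countable_dense 𝕜
  refine ⟨_, dense_adjoin_int_union_image_algebraMap hD hS, ?_⟩
  have hunion : #(S ∪ algebraMap 𝕜 A '' D : Set A) ≤ #S :=
    (mk_union_le _ _).trans <| add_le_of_le hSinf le_rfl <|
      (mk_le_aleph0_iff.2 (hDc.image _).to_subtype).trans hSinf
  calc #(Algebra.adjoin ℤ (S ∪ algebraMap 𝕜 A '' D))
      ≤ lift #ℤ ⊔ #(S ∪ algebraMap 𝕜 A '' D : Set A) ⊔ ℵ₀ := by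
        simpa using Algebra.lift_cardinalMk_adjoin_le ℤ (S ∪ algebraMap 𝕜 A '' D)
    _ ≤ #S := by simpa using ⟨hSinf, hunion⟩

end

open ComplexStarModule in
lemma Algebra.adjoin_setOf_isSelfAdjoint_eq_top {A : Type*} [Ring A] [StarRing A]
    [Algebra ℂ A] [StarModule ℂ A] : Algebra.adjoin ℂ {a : A | IsSelfAdjoint a} = ⊤ := by
  refine Algebra.eq_top_iff.2 fun a => ?_
  rw [← realPart_add_I_smul_imaginaryPart a]
  exact add_mem (Algebra.subset_adjoin (ℜ a).2)
    (Subalgebra.smul_mem _ (Algebra.subset_adjoin (R := ℂ) (ℑ a).2) _)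

namespace CommCStarAlgebra
variable {A : Type*} [CommCStarAlgebra A]

lemma exists_isTopologicalBasis_mk_le_of_dense {s : Set A} (hs : Dense s) (hinf : ℵ₀ ≤ #s) :
    ∃ 𝔅 : Set (Set (characterSpace ℂ A)), IsTopologicalBasis 𝔅 ∧ #𝔅 ≤ #s := by
  refine exists_isTopologicalBasis_mk_le_of_injective
    (f := fun (a : s) (φ : characterSpace ℂ A) => φ a)
    (fun a => (eval_continuous (a : A)).comp continuous_subtype_val) (fun φ ψ h => ?_) hinf
  exact CharacterSpace.ext <| congrFun <|
    Continuous.ext_on hs (map_continuous φ) (map_continuous ψ) fun a ha => congrFun h ⟨a, ha⟩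

lemma exists_selfAdjoint_generating_mk_le {𝔅 : Set (Set (characterSpace ℂ A))}
    (h𝔅 : IsTopologicalBasis 𝔅) :
    ∃ S : Set A, (∀ a ∈ S, IsSelfAdjoint a) ∧
      (Algebra.adjoin ℂ S).topologicalClosure = ⊤ ∧ #S ≤ #𝔅 * #𝔅 := by
  obtain ⟨T, hTsa, hT, hTcard⟩ := ContinuousMap.exists_selfAdjoint_generating_mk_le h𝔅
  let φ := (gelfandStarTransform A).symm
  let φc : C(characterSpace ℂ A, ℂ) →A[ℂ] A :=
    ⟨φ.toAlgEquiv.toAlgHom, (NonUnitalStarAlgHom.isometry φ φ.injective).continuous⟩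
  refine ⟨φ '' T, Set.forall_mem_image.2 fun f hf => (hTsa f hf).map φ, ?_,
    mk_image_le.trans hTcard⟩
  change (Algebra.adjoin ℂ ((φc : C(characterSpace ℂ A, ℂ) →ₐ[ℂ] A) '' T)).topologicalClosure = ⊤
  rw [← AlgHom.map_adjoin]
  exact DenseRange.topologicalClosure_map_subalgebra (f := φc) φ.surjective.denseRange hT

end CommCStarAlgebra

lemma csInf_le_csInf_of_forall_exists_le {α : Type*} [ConditionallyCompleteLinearOrderBot α]
    [WellFoundedLT α] {s t : Set α} (hs : s.Nonempty) (h : ∀ b ∈ s, ∃ a ∈ t, a ≤ b) :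
    sInf t ≤ sInf s :=
  let ⟨_, ha, hle⟩ := h _ (csInf_mem hs)
  (csInf_le' ha).trans hle

/-- **Proposition 3.16.** For a commutative unital C*-algebra `A` that is not finitely
generated as a C*-algebra, the density character of `A`, the least cardinality of a
self-adjoint generating set of `A` as a C*-algebra, and the weight of the character space
`Δ(A)` all coincide. -/
theorem densityCharacter_eq_genCstar_eq_weight
    {A : Type u} [CommCStarAlgebra A]
    (hfg : ¬ ∃ S : Set A, S.Finite ∧ (∀ a ∈ S, IsSelfAdjoint a) ∧
      (Algebra.adjoin ℂ S).topologicalClosure = ⊤) :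
    sInf {c : Cardinal.{u} | ∃ s : Set A, Dense s ∧ Cardinal.mk s = c} =
        sInf {c : Cardinal.{u} | ∃ S : Set A, (∀ a ∈ S, IsSelfAdjoint a) ∧
          (Algebra.adjoin ℂ S).topologicalClosure = ⊤ ∧ Cardinal.mk S = c} ∧
      sInf {c : Cardinal.{u} | ∃ S : Set A, (∀ a ∈ S, IsSelfAdjoint a) ∧
          (Algebra.adjoin ℂ S).topologicalClosure = ⊤ ∧ Cardinal.mk S = c} =
        sInf {c : Cardinal.{u} | ∃ 𝔅 : Set (Set (characterSpace ℂ A)),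
          TopologicalSpace.IsTopologicalBasis 𝔅 ∧ Cardinal.mk 𝔅 = c} := by
  set D := {c : Cardinal.{u} | ∃ s : Set A, Dense s ∧ #s = c}
  set G := {c : Cardinal.{u} | ∃ S : Set A, (∀ a ∈ S, IsSelfAdjoint a) ∧
    (Algebra.adjoin ℂ S).topologicalClosure = ⊤ ∧ #S = c}
  set W := {c : Cardinal.{u} | ∃ 𝔅 : Set (Set (characterSpace ℂ A)),
    IsTopologicalBasis 𝔅 ∧ #𝔅 = c}
  have hgen_inf {S : Set A} (hsa : ∀ a ∈ S, IsSelfAdjoint a)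
      (hgen : (Algebra.adjoin ℂ S).topologicalClosure = ⊤) : ℵ₀ ≤ #S :=
    not_lt.1 fun h => hfg ⟨S, lt_aleph0_iff_set_finite.1 h, hsa, hgen⟩
  have hsa_gen : (Algebra.adjoin ℂ {a : A | IsSelfAdjoint a}).topologicalClosure = ⊤ :=
    top_unique <|
      Algebra.adjoin_setOf_isSelfAdjoint_eq_top (A := A) ▸ Subalgebra.le_topologicalClosure _
  have hA_inf : ℵ₀ ≤ #A := (hgen_inf (fun _ ha => ha) hsa_gen).trans (mk_set_le _)
  have hDG : sInf D ≤ sInf G :=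
    csInf_le_csInf_of_forall_exists_le ⟨_, _, fun _ ha => ha, hsa_gen, rfl⟩ <| by
      rintro _ ⟨S, hsa, hgen, rfl⟩
      obtain ⟨s, hs, hcard⟩ :=
        exists_dense_mk_le_of_adjoin_topologicalClosure_eq_top hgen (hgen_inf hsa hgen)
      exact ⟨_, ⟨s, hs, rfl⟩, hcard⟩
  have hGW : sInf G ≤ sInf W :=
    csInf_le_csInf_of_forall_exists_le ⟨_, _, isTopologicalBasis_opens, rfl⟩ <| by
      rintro _ ⟨𝔅, h𝔅, rfl⟩
      obtain ⟨S, hsa, hgen, hcard⟩ := CommCStarAlgebra.exists_selfAdjoint_generating_mk_le h𝔅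
      have h𝔅_inf : ℵ₀ ≤ #𝔅 := not_lt.1 fun h =>
        (hgen_inf hsa hgen).not_gt (hcard.trans_lt (mul_lt_aleph0 h h))
      exact ⟨_, ⟨S, hsa, hgen, rfl⟩, hcard.trans (mul_eq_self h𝔅_inf).le⟩
  have hWD : sInf W ≤ sInf D :=
    csInf_le_csInf_of_forall_exists_le ⟨_, _, dense_univ, rfl⟩ <| by
      rintro _ ⟨s, hs, rfl⟩
      obtain ⟨𝔅, h𝔅, hcard⟩ :=
        CommCStarAlgebra.exists_isTopologicalBasis_mk_le_of_dense hs (hs.aleph0_le_mk hA_inf)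
      exact ⟨_, ⟨𝔅, h𝔅, rfl⟩, hcard⟩
  exact ⟨le_antisymm hDG (hGW.trans hWD), le_antisymm hGW (hWD.trans hDG)⟩
end

section
/- For every natural number d ≥ 1 there exist a non-unital star-subalgebra B of ℓ∞ and an element g ∈ B such that: every element of B lying in c0 equals 0; B has ℂ-dimension d (Module.finrank ℂ B = d); and B coincides with the non-unital subalgebra of ℓ∞ generated by g, i.e. NonUnitalAlgebra.adjoin ℂ {g} = B (so B is generated by a single element as an algebra, without taking closures). -/
/-!
Periodic extension embeds `Fin d → ℂ` into `ℓ∞` as a `d`-dimensional star subalgebra `B`, and a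
periodic sequence tending to `0` vanishes, so `B` meets `c₀` only at `0`. If `v : Fin d → ℂ` has
distinct nonzero entries, then `v, v², …, vᵈ` are the rows of `(Vandermonde v)ᵀ * diag v`, an
invertible matrix, so they span `Fin d → ℂ`; hence `v` generates `Fin d → ℂ` as a non-unital
algebra, and its periodic extension generates `B`.
-/

open Filter Topology ENNReal

noncomputable section

open Function

theorem Function.Periodic.eq_const_of_tendsto {X : Type*} [TopologicalSpace X] [T2Space X]
    {f : ℕ → X} {c : ℕ} (hf : Periodic f c) (hc : 0 < c) {a : X}
    (h : Tendsto f atTop (𝓝 a)) (n : ℕ) : f n = a := by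
  have hshift : Tendsto (fun k : ℕ => n + k * c) atTop atTop :=
    tendsto_atTop_mono (fun k => show k ≤ n + k * c by nlinarith) tendsto_id
  have hconst (k : ℕ) : f (n + k * c) = f n := by simpa using hf.nat_mul k n
  refine tendsto_nhds_unique ?_ (h.comp hshift)
  simpa only [comp_def, hconst] using tendsto_const_nhds

theorem NonUnitalAlgebra.pow_succ_mem_adjoin_singleton {R A : Type*} [CommSemiring R] [Semiring A]
    [Algebra R A] (x : A) (k : ℕ) : x ^ (k + 1) ∈ adjoin R {x} := by
  induction k with
  | zero => simp [self_mem_adjoin_singleton]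
  | succ k ih => simpa only [pow_succ x (k + 1)] using mul_mem ih (self_mem_adjoin_singleton R x)

section Vandermonde

variable {K : Type*} [Field K] {d : ℕ} {v : Fin d → K}

theorem linearIndependent_pow_succ_of_injective (hv : Injective v) (h0 : ∀ i, v i ≠ 0) :
    LinearIndependent K (fun k : Fin d => v ^ ((k : ℕ) + 1)) := by
  have hunit : IsUnit ((Matrix.vandermonde v).transpose * Matrix.diagonal v) := by
    refine .mul ?_ ?_
    · rw [Matrix.isUnit_iff_isUnit_det, Matrix.det_transpose, isUnit_iff_ne_zero]
      exact Matrix.det_vandermonde_ne_zero_iff.mpr hv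
    · rw [Matrix.isUnit_iff_isUnit_det, Matrix.det_diagonal, isUnit_iff_ne_zero]
      exact Finset.prod_ne_zero_iff.mpr fun i _ => h0 i
  convert Matrix.linearIndependent_rows_of_isUnit hunit using 1
  ext k i
  simp [Matrix.mul_diagonal, Matrix.vandermonde_apply, pow_succ]

theorem NonUnitalAlgebra.adjoin_singleton_eq_top_of_injective (hv : Injective v)
    (h0 : ∀ i, v i ≠ 0) : adjoin K {v} = ⊤ := by
  have hspan : Submodule.span K (Set.range fun k : Fin d => v ^ ((k : ℕ) + 1)) = ⊤ :=
    (linearIndependent_pow_succ_of_injective hv h0).span_eq_top_of_card_eq_finrank' (by simp)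
  refine eq_top_iff.mpr fun x => Submodule.span_le.mpr ?_ (hspan ▸ Submodule.mem_top)
  rintro _ ⟨k, rfl⟩
  exact pow_succ_mem_adjoin_singleton v k

end Vandermonde

namespace NonUnitalStarAlgHom

variable {R A B : Type*} [CommSemiring R] [NonUnitalSemiring A] [Module R A] [Star A]
  [NonUnitalSemiring B] [Module R B] [Star B] (f : A →⋆ₙₐ[R] B)

theorem adjoin_singleton_eq_range [IsScalarTower R A A] [SMulCommClass R A A]
    [IsScalarTower R B B] [SMulCommClass R B B] {x : A} (hx : NonUnitalAlgebra.adjoin R {x} = ⊤) :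
    NonUnitalAlgebra.adjoin R {f x} = (NonUnitalStarAlgHom.range f).toNonUnitalSubalgebra := by
  rw [← NonUnitalAlgHom.map_adjoin_singleton R A f, hx]
  exact SetLike.coe_injective Set.image_univ

theorem finrank_range_of_injective (hf : Injective f) :
    Module.finrank R (NonUnitalStarAlgHom.range f) = Module.finrank R A :=
  LinearMap.finrank_range_of_inj (f := (f : A →ₗ[R] B)) hf

end NonUnitalStarAlgHom

section PeriodicEmbedding

variable {d : ℕ} (hd : 0 < d)

def periodicEmbedding : (Fin d → ℂ) →⋆ₙₐ[ℂ] linf where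
  toFun v := ⟨fun n => v ⟨n % d, Nat.mod_lt n hd⟩, memℓp_infty <|
    (Set.finite_range fun i => ‖v i‖).subset (Set.range_comp_subset_range _ _) |>.bddAbove⟩
  map_smul' _ _ := rfl
  map_zero' := rfl
  map_add' _ _ := rfl
  map_mul' _ _ := rfl
  map_star' _ := rfl

theorem periodicEmbedding_apply (v : Fin d → ℂ) (n : ℕ) :
    (periodicEmbedding hd v : ℕ → ℂ) n = v ⟨n % d, Nat.mod_lt n hd⟩ :=
  rfl

theorem periodicEmbedding_apply_val (v : Fin d → ℂ) (i : Fin d) :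
    (periodicEmbedding hd v : ℕ → ℂ) i = v i := by
  simp [periodicEmbedding_apply, Nat.mod_eq_of_lt i.isLt]

theorem periodic_periodicEmbedding (v : Fin d → ℂ) :
    Periodic (periodicEmbedding hd v : ℕ → ℂ) d := by
  intro n
  simp [periodicEmbedding_apply]

theorem periodicEmbedding_injective : Injective (periodicEmbedding hd) := by
  intro v w h
  funext i
  rw [← periodicEmbedding_apply_val hd v, h, periodicEmbedding_apply_val]

theorem eq_zero_of_periodicEmbedding_mem_c0 {v : Fin d → ℂ} (hv : periodicEmbedding hd v ∈ c0) :
    v = 0 := by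
  funext i
  rw [← periodicEmbedding_apply_val hd v]
  exact (periodic_periodicEmbedding hd v).eq_const_of_tendsto hd hv i

end PeriodicEmbedding

/-- **Theorem 3.17(i).** For every `d ≥ 1` the set `(ℓ∞ \ c₀) ∪ {0}` is `(d, 1)`-genalgebrable
and `(d, 1)`-C*-genalgebrable: there is a `d`-dimensional star-subalgebra `B` of `ℓ∞` meeting
`c₀` only at `0` that is generated (as an algebra, without closure) by a single element `g`. -/
theorem exists_singly_generated_star_subalgebra_of_dim
    (d : ℕ) (hd : 1 ≤ d) :
    ∃ (B : NonUnitalStarSubalgebra ℂ linf) (g : linf), g ∈ B ∧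
      (∀ y ∈ B, y ∈ c0 → y = 0) ∧
      Module.finrank ℂ B = d ∧
      NonUnitalAlgebra.adjoin ℂ ({g} : Set linf) = B.toNonUnitalSubalgebra := by
  let φ := periodicEmbedding hd
  refine ⟨NonUnitalStarAlgHom.range φ, φ fun i => (i : ℂ) + 1,
    NonUnitalStarAlgHom.mem_range_self φ _, ?_, ?_, ?_⟩
  · rintro _ ⟨v, rfl⟩ hv
    rw [eq_zero_of_periodicEmbedding_mem_c0 hd hv, map_zero]
  · rw [φ.finrank_range_of_injective (periodicEmbedding_injective hd), Module.finrank_fin_fun]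
  · refine φ.adjoin_singleton_eq_range (NonUnitalAlgebra.adjoin_singleton_eq_top_of_injective ?_ ?_)
    · exact fun i j h => Fin.ext (by exact_mod_cast add_right_cancel h)
    · exact fun i => Nat.cast_add_one_ne_zero i
end
end

section
/- There exists an injective star-algebra homomorphism Ψ : ℓ∞ → ℓ∞ that is an isometry and such that the only element of the range of Ψ lying in c0 is 0; that is, ℓ∞ contains a *-isomorphic copy of itself inside (ℓ∞ \ c0) ∪ {0}. -/
open Filter Topology ENNReal

noncomputable section

/-! Precomposition with `n ↦ (Nat.unpair n).1` is an isometric *-homomorphism of `ℓ∞`, since this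
map is surjective. It repeats every value `f i` along the infinite fiber `{Nat.pair i n | n}`, so
`f ∘ (Nat.unpair ·).1` can only tend to `0` when every `f i` is `0`. -/

namespace lp

variable {𝕜 B ι κ : Type*}

section NormedAddCommGroup

variable [NormedAddCommGroup B]

theorem memℓp_infty_comp (f : lp (fun _ : ι => B) ∞) (g : κ → ι) :
    Memℓp (f ∘ g) ∞ :=
  memℓp_infty ⟨‖f‖, by
    rintro _ ⟨k, rfl⟩
    exact norm_apply_le_norm ENNReal.top_ne_zero f (g k)⟩

end NormedAddCommGroup

variable [NormedRing 𝕜] [NonUnitalNormedRing B] [StarRing B] [NormedStarGroup B]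
  [Module 𝕜 B] [IsBoundedSMul 𝕜 B]

def compStarHom (g : κ → ι) : lp (fun _ : ι => B) ∞ →⋆ₙₐ[𝕜] lp (fun _ : κ => B) ∞ where
  toFun f := ⟨f ∘ g, memℓp_infty_comp f g⟩
  map_smul' _ _ := rfl
  map_zero' := rfl
  map_add' _ _ := rfl
  map_mul' _ _ := rfl
  map_star' _ := rfl

theorem norm_compStarHom {g : κ → ι} (hg : Function.Surjective g) (f : lp (fun _ : ι => B) ∞) :
    ‖compStarHom (𝕜 := 𝕜) g f‖ = ‖f‖ := by
  refine le_antisymm (norm_le_of_forall_le (norm_nonneg f) fun k => ?_)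
    (norm_le_of_forall_le (norm_nonneg _) fun i => ?_)
  · exact norm_apply_le_norm ENNReal.top_ne_zero f (g k)
  · obtain ⟨k, rfl⟩ := hg i
    exact norm_apply_le_norm ENNReal.top_ne_zero (compStarHom (𝕜 := 𝕜) g f) k

theorem isometry_compStarHom {g : κ → ι} (hg : Function.Surjective g) :
    Isometry (compStarHom (𝕜 := 𝕜) (B := B) g) :=
  AddMonoidHomClass.isometry_of_norm _ (norm_compStarHom hg)

end lp

theorem eq_of_tendsto_comp_of_infinite_fiber {ι X : Type*} [TopologicalSpace X] [T2Space X]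
    {u : ι → X} {g : ℕ → ι} {a : X} (h : Tendsto (u ∘ g) atTop (𝓝 a)) {i : ι}
    (hi : (g ⁻¹' {i}).Infinite) : u i = a :=
  tendsto_nhds_unique_of_frequently_eq tendsto_const_nhds h <|
    (Nat.frequently_atTop_iff_infinite.2 hi).mono fun _ hn => (congrArg u hn).symm

theorem Nat.infinite_unpair_fst_preimage (i : ℕ) :
    ((fun n => (Nat.unpair n).1) ⁻¹' {i}).Infinite :=
  Set.infinite_of_injective_forall_mem
    (Nat.pairEquiv.injective.comp (Prod.mk_right_injective i)) fun n => by simp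

/-- **Theorem 4.1, first part.** There is a *-isomorphic copy of `ℓ∞` inside
`(ℓ∞ \ c₀) ∪ {0}`: an isometric injective star-algebra homomorphism `Ψ : ℓ∞ → ℓ∞`
whose range meets `c₀` only at `0`. -/
theorem exists_star_isomorphic_copy_of_linf_avoiding_c0 :
    ∃ Ψ : linf →⋆ₙₐ[ℂ] linf,
      Isometry Ψ ∧ Function.Injective Ψ ∧ ∀ y ∈ Set.range Ψ, y ∈ c0 → y = 0 := by
  have hsurj : Function.Surjective fun n => (Nat.unpair n).1 :=
    fun i => ⟨Nat.pair i 0, by simp⟩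
  have hΨ := lp.isometry_compStarHom (𝕜 := ℂ) (B := ℂ) hsurj
  refine ⟨lp.compStarHom _, hΨ, hΨ.injective, ?_⟩
  rintro _ ⟨f, rfl⟩ hf
  suffices f = 0 by rw [this, map_zero]
  ext i
  exact eq_of_tendsto_comp_of_infinite_fiber (u := f) hf (Nat.infinite_unpair_fst_preimage i)
end
end
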